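/- arXiv:1611.07267 — 8 statements merged into one kernel-verified Lean document; each statement's English description precedes it below -/
import Mathlib

section
/- If X is a Hausdorff topological space in which every discrete subset is contained in a Lindelöf subspace, and X is first-countable (character at most ℵ₀), then the hereditary Lindelöf degree of X is at most 2^ℵ₀; in particular, every right-separated subset of X has cardinality at most the continuum. -/
open Cardinal Set Topology

universe u

/-- A subset `D` is discrete (as a subspace): every point of `D` has an open
neighbourhood meeting `D` only in that point. -/
def IsDiscreteSubset {X : Type u} [TopologicalSpace X] (D : Set X) : Prop :=
  ∀ x ∈ D, ∃ U : Set X, IsOpen U ∧ U ∩ D = {x}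

/-- `X` is almost discretely Lindelöf: every discrete subset is contained in a
Lindelöf subspace. -/
def AlmostDiscretelyLindelof (X : Type u) [TopologicalSpace X] : Prop :=
  ∀ D : Set X, IsDiscreteSubset D → ∃ L : Set X, IsLindelof L ∧ D ⊆ L

/-- The character of `X` is at most `κ`: every point has an open neighbourhood
base of cardinality at most `κ`. -/
def HasCharacterLE (X : Type u) [TopologicalSpace X] (κ : Cardinal.{u}) : Prop :=
  ∀ x : X, ∃ B : Set (Set X), #B ≤ κ ∧ (∀ U ∈ B, IsOpen U ∧ x ∈ U) ∧
    ∀ V ∈ nhds x, ∃ U ∈ B, U ⊆ V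

/-- `R` is right-separated: it carries a well-order in which each point has a
neighbourhood avoiding all strictly later points (initial segments are open). -/
def RightSeparated {X : Type u} [TopologicalSpace X] (R : Set X) : Prop :=
  ∃ r : R → R → Prop, IsWellOrder R r ∧
    ∀ a : R, ∃ U : Set X, IsOpen U ∧ (a : X) ∈ U ∧ ∀ b : R, (b : X) ∈ U → ¬ r a b

/-- `R` is left-separated: it carries a well-order in which each point has a
neighbourhood avoiding all strictly earlier points (initial segments are closed). -/
def LeftSeparated {X : Type u} [TopologicalSpace X] (R : Set X) : Prop :=
  ∃ r : R → R → Prop, IsWellOrder R r ∧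
    ∀ a : R, ∃ U : Set X, IsOpen U ∧ (a : X) ∈ U ∧ ∀ b : R, (b : X) ∈ U → ¬ r b a

/-- The θ-closure operator: `x ∈ thetaCl A` iff the closure of every open
neighbourhood of `x` meets `A`. -/
def thetaCl {X : Type u} [TopologicalSpace X] (A : Set X) : Set X :=
  {x | ∀ U : Set X, IsOpen U → x ∈ U → (closure U ∩ A).Nonempty}

/-- `A` is θ-closed if it coincides with its θ-closure operator value. -/
def IsThetaClosed {X : Type u} [TopologicalSpace X] (A : Set X) : Prop :=
  thetaCl A = A

/-- `[A]_θ`, the smallest θ-closed set containing `A`. -/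
def thetaClosure {X : Type u} [TopologicalSpace X] (A : Set X) : Set X :=
  ⋂₀ {B : Set X | A ⊆ B ∧ IsThetaClosed B}

/-- A (well-ordered) sequence is free if at every cut the closures of the two
pieces are disjoint. -/
def IsFreeSeq {X : Type u} [TopologicalSpace X] {ι : Type u} [LinearOrder ι]
    (f : ι → X) : Prop :=
  ∀ i : ι, closure (f '' {j | j < i}) ∩ closure (f '' {j | i ≤ j}) = ∅

/-- A (well-ordered) sequence is θ-free if at every cut the θ-closure of the
initial piece is disjoint from the closure of the final piece. -/
def IsThetaFreeSeq {X : Type u} [TopologicalSpace X] {ι : Type u} [LinearOrder ι]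
    (f : ι → X) : Prop :=
  ∀ i : ι, thetaClosure (f '' {j | j < i}) ∩ closure (f '' {j | i ≤ j}) = ∅

/-- A cellular family: pairwise disjoint nonempty open sets. -/
def IsCellularFamily {X : Type u} [TopologicalSpace X] (𝒰 : Set (Set X)) : Prop :=
  (∀ U ∈ 𝒰, IsOpen U ∧ U.Nonempty) ∧ 𝒰.PairwiseDisjoint id

/-- `X` is cellular-Lindelöf: every cellular family admits a Lindelöf subspace
meeting each of its members. -/
def CellularLindelof (X : Type u) [TopologicalSpace X] : Prop :=
  ∀ 𝒰 : Set (Set X), IsCellularFamily 𝒰 →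
    ∃ L : Set X, IsLindelof L ∧ ∀ U ∈ 𝒰, (U ∩ L).Nonempty

/-- `lam` is a caliber of `X`: any `lam`-many nonempty open sets include
`lam`-many with a common point. -/
def IsCaliber (X : Type u) [TopologicalSpace X] (lam : Cardinal.{u}) : Prop :=
  ∀ (ι : Type u) (U : ι → Set X), #ι = lam →
    (∀ i, IsOpen (U i) ∧ (U i).Nonempty) →
    ∃ S : Set ι, #S = lam ∧ (⋂ i ∈ S, U i).Nonempty

/-!
In a first-countable Hausdorff space a set of at most `𝔠` points has at most `𝔠 ^ ℵ₀ = 𝔠` points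
in its closure. Closing a point off `ω₁` times under limits of sequences and under choosing a point
outside every proper countable union of basic neighbourhoods of its points gives a set `F` of at
most `𝔠` points which is closed, hence Lindelöf when the space is. A point outside `F` would be
avoided by countably many basic neighbourhoods covering `F`, yet `F` has a point outside their
union (Arhangel'skii).

If a right-separated `R` had more than `𝔠` points, choosing `𝔠⁺` times the least point of `R`
outside the closure of the earlier choices would give a subset that is both left- and
right-separated, hence discrete; it lies in a Lindelöf subspace, which has at most `𝔠` points.
Dually, an open cover of `Y` with no subcover of size at most `κ` yields, by choosing `κ⁺` times a
point outside the members of the cover picked so far, a right-separated set of size `κ⁺`.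
-/

open Filter

section ClosureCard

variable {X : Type u} [TopologicalSpace X] [T2Space X] [FirstCountableTopology X]

theorem mk_closure_le_pow_aleph0 (A : Set X) : #(closure A) ≤ #A ^ ℵ₀ := by
  choose s hsA hs using fun x : closure A => mem_closure_iff_seq_limit.mp x.2
  have hinj : Function.Injective fun x : closure A => fun n => (⟨s x n, hsA x n⟩ : A) := by
    intro x y hxy
    have hseq : s x = s y := funext fun n => congrArg Subtype.val (congrFun hxy n)
    exact Subtype.ext (tendsto_nhds_unique (hs x) (hseq ▸ hs y))
  simpa [Cardinal.mk_arrow] using Cardinal.mk_le_of_injective hinj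

theorem mk_closure_le_continuum {A : Set X} (hA : #A ≤ 𝔠) : #(closure A) ≤ 𝔠 :=
  (mk_closure_le_pow_aleph0 A).trans <|
    (power_le_power_right hA).trans_eq continuum_power_aleph0

end ClosureCard

section ClosingOff

open Ordinal

variable {Y : Type u} (G : (ℕ → Y) → Set Y) (A : Set Y)

def closingOff (i : Ordinal.{u}) : Set Y :=
  let S := ⋃ j < i, closingOff j
  A ∪ ⋃ s : ℕ → S, G fun n => s n
termination_by i

theorem subset_closingOff (i : Ordinal.{u}) : A ⊆ closingOff G A i := by
  rw [closingOff]
  exact subset_union_left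

theorem subset_closingOff_of_forall_lt {i : Ordinal.{u}} {s : ℕ → Y}
    (hs : ∀ n, ∃ j < i, s n ∈ closingOff G A j) : G s ⊆ closingOff G A i := by
  rw [closingOff]
  choose j hji hj using hs
  let t : ℕ → ⋃ j < i, closingOff G A j := fun n => ⟨s n, mem_biUnion (hji n) (hj n)⟩
  exact (subset_iUnion (fun t : ℕ → ↥(⋃ j < i, closingOff G A j) => G fun n => t n) t).trans
    subset_union_right

variable {G A}

theorem mk_closingOff_le_continuum (hA : #A ≤ 𝔠) (hG : ∀ s, #(G s) ≤ 𝔠) {i : Ordinal.{u}}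
    (hi : i < ω₁) : #(closingOff G A i) ≤ 𝔠 := by
  induction i using WellFoundedLT.induction with
  | ind i ih =>
    have hS : #(⋃ j < i, closingOff G A j) ≤ 𝔠 := by
      refine mk_biUnion_le_of_le ?_ aleph0_le_continuum _ fun j hj => ih j hj (hj.trans hi)
      exact (card_le_of_le_ord (hi.le.trans_eq (ord_aleph 1).symm)).trans aleph_one_le_continuum
    have hseq : #(ℕ → ⋃ j < i, closingOff G A j) ≤ 𝔠 := by
      simpa [Cardinal.mk_arrow] using
        (power_le_power_right (c := ℵ₀) hS).trans_eq continuum_power_aleph0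
    rw [closingOff]
    refine (mk_union_le _ _).trans (add_le_of_le aleph0_le_continuum hA ?_)
    exact (mk_iUnion_le _).trans <| (mul_le_mul' hseq (ciSup_le' fun s => hG _)).trans_eq
      (mul_eq_self aleph0_le_continuum)

end ClosingOff

open Ordinal in
theorem exists_superset_mk_le_continuum_seqStable {Y : Type u} (G : (ℕ → Y) → Set Y) {A : Set Y}
    (hA : #A ≤ 𝔠) (hG : ∀ s, #(G s) ≤ 𝔠) :
    ∃ F, A ⊆ F ∧ #F ≤ 𝔠 ∧ ∀ s : ℕ → Y, (∀ n, s n ∈ F) → G s ⊆ F := by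
  refine ⟨⋃ i < ω₁, closingOff G A i, ?_, ?_, fun s hs => ?_⟩
  · exact (subset_closingOff G A 0).trans
      (subset_biUnion_of_mem (u := closingOff G A) (omega_pos 1))
  · refine mk_biUnion_le_of_le ?_ aleph0_le_continuum _ fun i hi =>
      mk_closingOff_le_continuum hA hG hi
    rw [card_omega]
    exact aleph_one_le_continuum
  · choose j hj hsj using fun n => mem_iUnion₂.1 (hs n)
    have hsup : (⨆ n, j n + 1) < ω₁ :=
      iSup_lt_omega_one fun n => (isSuccLimit_omega 1).add_one_lt (hj n)
    exact (subset_closingOff_of_forall_lt G A fun n =>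
      ⟨j n, (lt_add_one (j n)).trans_le (le_ciSup Ordinal.bddAbove_of_small n), hsj n⟩).trans
      (subset_biUnion_of_mem (u := closingOff G A) hsup)

theorem eq_univ_of_isClosed_of_forall_exists_notMem_iUnion {Y : Type u} [TopologicalSpace Y]
    [T1Space Y] [LindelofSpace Y] {b : Y → ℕ → Set Y} (hb : ∀ x, (𝓝 x).HasAntitoneBasis (b x))
    {F : Set Y} (hF : IsClosed F) (hne : F.Nonempty)
    (hout : ∀ s : ℕ → Y, (∀ k, s k ∈ F) → ∀ m : ℕ → ℕ, ⋃ k, b (s k) (m k) ≠ Set.univ →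
      ∃ y ∈ F, y ∉ ⋃ k, b (s k) (m k)) : F = Set.univ := by
  by_contra hFne
  obtain ⟨z, hz⟩ := (ne_univ_iff_exists_notMem F).1 hFne
  have hn : ∀ x : F, ∃ n, z ∉ b x n := fun x =>
    ((hb x).mem_iff.1 (isOpen_compl_singleton.mem_nhds fun h : (x : Y) = z => hz (h ▸ x.2))).imp
      fun _ hn hzb => hn hzb rfl
  choose n hn using hn
  have : Nonempty F := hne.to_subtype
  obtain ⟨e, hcov⟩ := hF.isLindelof.indexed_countable_subcover
    (fun x : F => interior (b x (n x))) (fun _ => isOpen_interior)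
    fun x hx => mem_iUnion.2 ⟨⟨x, hx⟩, mem_interior_iff_mem_nhds.2 ((hb x).mem _)⟩
  have hzU : z ∉ ⋃ k, b (e k) (n (e k)) := fun h => (mem_iUnion.1 h).elim fun k => hn (e k)
  obtain ⟨y, hyF, hyU⟩ := hout (fun k => e k) (fun k => (e k).2) (fun k => n (e k))
    fun h => hzU (h ▸ mem_univ z)
  exact hyU ((hcov.trans (iUnion_mono fun k => interior_subset)) hyF)

theorem LindelofSpace.mk_le_continuum (Y : Type u) [TopologicalSpace Y] [T2Space Y]
    [FirstCountableTopology Y] [LindelofSpace Y] : #Y ≤ 𝔠 := by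
  rcases isEmpty_or_nonempty Y with _ | ⟨⟨y₀⟩⟩
  · simp
  choose b hb using fun x : Y => (𝓝 x).exists_antitone_basis
  have hw : ∀ U : Set Y, ∃ y, U ≠ Set.univ → y ∉ U := fun U =>
    (em (U = Set.univ)).elim (fun h => ⟨y₀, fun h' => absurd h h'⟩) fun h =>
      ((ne_univ_iff_exists_notMem U).1 h).imp fun _ hy _ => hy
  choose w hw using hw
  let G : (ℕ → Y) → Set Y := fun s =>
    {x | Tendsto s atTop (𝓝 x)} ∪ range fun m : ℕ → ℕ => w (⋃ k, b (s k) (m k))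
  have hG : ∀ s, #(G s) ≤ 𝔠 := by
    intro s
    have hlim : #{x | Tendsto s atTop (𝓝 x)} ≤ 𝔠 :=
      (mk_le_one_iff_set_subsingleton.2 fun x hx y hy => tendsto_nhds_unique hx hy).trans
        (one_lt_aleph0.le.trans aleph0_le_continuum)
    have hwit : #(range fun m : ℕ → ℕ => w (⋃ k, b (s k) (m k))) ≤ 𝔠 := by
      simpa using mk_range_le_lift (f := fun m : ℕ → ℕ => w (⋃ k, b (s k) (m k)))
    exact (mk_union_le _ _).trans (add_le_of_le aleph0_le_continuum hlim hwit)
  obtain ⟨F, hy₀F, hFcard, hFG⟩ := exists_superset_mk_le_continuum_seqStable G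
    (A := {y₀}) (by simpa using one_lt_aleph0.le.trans aleph0_le_continuum) hG
  have hFclosed : IsClosed F := isClosed_of_closure_subset fun x hx => by
    obtain ⟨s, hsF, hsx⟩ := mem_closure_iff_seq_limit.mp hx
    exact hFG s hsF (Or.inl hsx)
  have hF : F = Set.univ := eq_univ_of_isClosed_of_forall_exists_notMem_iUnion hb hFclosed
    ⟨y₀, hy₀F rfl⟩ fun s hs m hU => ⟨_, hFG s hs (Or.inr ⟨m, rfl⟩), hw _ hU⟩
  simpa [hF] using hFcard

theorem IsLindelof.mk_le_continuum {X : Type u} [TopologicalSpace X] [T2Space X]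
    [FirstCountableTopology X] {L : Set X} (hL : IsLindelof L) : #L ≤ 𝔠 :=
  have := isLindelof_iff_lindelofSpace.mp hL
  LindelofSpace.mk_le_continuum L

theorem exists_forall_Iio_rec {ι α : Type*} [Preorder ι] [WellFoundedLT ι]
    (P : ∀ i : ι, (Iio i → α) → α → Prop) (h : ∀ i g, ∃ a, P i g a) :
    ∃ f : ι → α, ∀ i, P i (fun j => f j) (f i) := by
  let f : ι → α := wellFounded_lt.fix fun i g => (h i fun j => g j j.2).choose
  refine ⟨f, fun i => ?_⟩
  rw [show f i = _ from wellFounded_lt.fix_eq _ i]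
  exact (h i fun j => f j).choose_spec

theorem mk_Iio_ord_succ_toType_le {κ : Cardinal.{u}} (i : (Order.succ κ).ord.ToType) :
    #(Iio i) ≤ κ :=
  Order.lt_succ_iff.1 (by simpa using mk_Iio_lt i (by simp))

section SeparatedSeq

variable {X : Type u} [TopologicalSpace X] {ι : Type*} [LinearOrder ι]

def IsRightSeparatedSeq (f : ι → X) : Prop :=
  ∀ i, ∃ U, IsOpen U ∧ f i ∈ U ∧ ∀ j, i < j → f j ∉ U

namespace IsRightSeparatedSeq

variable {f : ι → X}

theorem injective (hf : IsRightSeparatedSeq f) : Function.Injective f := by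
  refine Function.Injective.of_lt_imp_ne fun i j hij hfij => ?_
  obtain ⟨U, -, hiU, hU⟩ := hf i
  exact hU j hij (hfij ▸ hiU)

theorem rightSeparated_range [WellFoundedLT ι] (hf : IsRightSeparatedSeq f) :
    RightSeparated (range f) := by
  let e := Equiv.ofInjective f hf.injective
  refine ⟨e.symm ⁻¹'o (· < ·), (RelEmbedding.preimage e.symm.toEmbedding (· < ·)).isWellOrder,
    fun a => ?_⟩
  obtain ⟨U, hUo, hiU, hU⟩ := hf (e.symm a)
  rw [Equiv.apply_ofInjective_symm hf.injective] at hiU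
  exact ⟨U, hUo, hiU, fun b hb hab => hU _ hab (by rwa [Equiv.apply_ofInjective_symm hf.injective])⟩

theorem isDiscreteSubset_range (hf : IsRightSeparatedSeq f)
    (hleft : ∀ i, f i ∉ closure (f '' Iio i)) : IsDiscreteSubset (range f) := by
  rintro _ ⟨i, rfl⟩
  obtain ⟨U, hUo, hiU, hU⟩ := hf i
  refine ⟨U ∩ (closure (f '' Iio i))ᶜ, hUo.inter isClosed_closure.isOpen_compl, ?_⟩
  refine subset_antisymm ?_ (singleton_subset_iff.2 ⟨⟨hiU, hleft i⟩, i, rfl⟩)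
  rintro _ ⟨⟨hjU, hj⟩, j, rfl⟩
  rcases lt_trichotomy j i with hji | rfl | hij
  · exact (hj (subset_closure (mem_image_of_mem f hji))).elim
  · rfl
  · exact (hU j hij hjU).elim

end IsRightSeparatedSeq

end SeparatedSeq

theorem RightSeparated.mk_le_continuum {X : Type u} [TopologicalSpace X] [T2Space X]
    [FirstCountableTopology X] (hADL : AlmostDiscretelyLindelof X) {R : Set X}
    (hR : RightSeparated R) : #R ≤ 𝔠 := by
  obtain ⟨r, hr, hU⟩ := hR
  by_contra! hRbig
  -- greedily pick the `r`-least point of `R` outside the closure of the points picked so far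
  have hex : ∀ (i : (Order.succ 𝔠).ord.ToType) (g : Iio i → R), ∃ a : R,
      (a : X) ∉ closure (range fun j => (g j : X)) ∧
      ∀ b : R, (b : X) ∉ closure (range fun j => (g j : X)) → ¬ r b a := by
    intro i g
    have hT : {b : R | (b : X) ∉ closure (range fun j => (g j : X))}.Nonempty := by
      by_contra! hT
      have hsub : R ⊆ closure (range fun j => (g j : X)) := fun x hx => by
        by_contra hxC
        exact eq_empty_iff_forall_notMem.1 hT ⟨x, hx⟩ hxC
      refine hRbig.not_ge ((mk_le_mk_of_subset hsub).trans (mk_closure_le_continuum ?_))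
      exact mk_range_le.trans (mk_Iio_ord_succ_toType_le i)
    exact hr.wf.has_min _ hT
  obtain ⟨f, hf⟩ := exists_forall_Iio_rec _ hex
  let x := fun i => (f i : X)
  have hleft : ∀ i, x i ∉ closure (x '' Iio i) := fun i => by
    simpa only [image_eq_range] using (hf i).1
  have hsep : IsRightSeparatedSeq x := by
    intro i
    obtain ⟨U, hUo, hiU, hUr⟩ := hU (f i)
    refine ⟨U, hUo, hiU, fun j hij hjU => hUr (f j) hjU ?_⟩
    have hne : f i ≠ f j := fun h => hleft j (subset_closure ⟨i, hij, congrArg Subtype.val h⟩)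
    have hnot : ¬ r (f j) (f i) := (hf i).2 (f j) <| by
      simpa only [image_eq_range] using
        fun hj => hleft j (closure_mono (image_mono (Iio_subset_Iio hij.le)) hj)
    exact (trichotomous_of r (f i) (f j)).resolve_right (not_or.2 ⟨hne, hnot⟩)
  obtain ⟨L, hL, hsub⟩ := hADL _ (hsep.isDiscreteSubset_range hleft)
  have hcard := (mk_le_mk_of_subset hsub).trans hL.mk_le_continuum
  rw [mk_range_eq x hsep.injective, mk_ord_toType] at hcard
  exact (Order.lt_succ 𝔠).not_ge hcard

theorem exists_subcover_mk_le_of_forall_rightSeparated {X : Type u} [TopologicalSpace X]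
    {κ : Cardinal.{u}} (h : ∀ R : Set X, RightSeparated R → #R ≤ κ) {Y : Set X}
    {𝒰 : Set (Set X)} (hopen : ∀ U ∈ 𝒰, IsOpen U) (hcov : Y ⊆ ⋃₀ 𝒰) :
    ∃ 𝒱 ⊆ 𝒰, #𝒱 ≤ κ ∧ Y ⊆ ⋃₀ 𝒱 := by
  by_contra! hno
  choose U hU𝒰 hyU using fun y : Y => mem_sUnion.1 (hcov y.2)
  have hex : ∀ (i : (Order.succ κ).ord.ToType) (g : Iio i → Y), ∃ y : Y, ∀ j, (y : X) ∉ U (g j) :=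
    by
    intro i g
    obtain ⟨y, hyY, hy⟩ := not_subset.1 <| hno (range (U ∘ g)) (range_subset_iff.2 fun j => hU𝒰 _)
      (mk_range_le.trans (mk_Iio_ord_succ_toType_le i))
    exact ⟨⟨y, hyY⟩, fun j hj => hy ⟨_, mem_range_self j, hj⟩⟩
  obtain ⟨f, hf⟩ := exists_forall_Iio_rec _ hex
  have hsep : IsRightSeparatedSeq fun i => (f i : X) := fun i =>
    ⟨U (f i), hopen _ (hU𝒰 _), hyU _, fun j hij => hf j ⟨i, hij⟩⟩
  have hcard := h _ hsep.rightSeparated_range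
  rw [mk_range_eq _ hsep.injective, mk_ord_toType] at hcard
  exact (Order.lt_succ κ).not_ge hcard

/-- an almost discretely Lindelöf first-countable Hausdorff space has
hereditary Lindelöf degree at most `𝔠`; in particular every right-separated subset
has cardinality at most the continuum. -/
theorem stmt0 {X : Type u} [TopologicalSpace X] [T2Space X]
    [FirstCountableTopology X] (hADL : AlmostDiscretelyLindelof X) :
    (∀ (Y : Set X) (𝒰 : Set (Set X)), (∀ U ∈ 𝒰, IsOpen U) → Y ⊆ ⋃₀ 𝒰 →
      ∃ 𝒱 ⊆ 𝒰, #𝒱 ≤ Cardinal.continuum ∧ Y ⊆ ⋃₀ 𝒱) ∧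
    (∀ R : Set X, RightSeparated R → #R ≤ Cardinal.continuum) := by
  have hRS : ∀ R : Set X, RightSeparated R → #R ≤ 𝔠 := fun _ hR => hR.mk_le_continuum hADL
  exact ⟨fun _ _ => exists_subcover_mk_le_of_forall_rightSeparated hRS, hRS⟩
end

section
/- In an almost discretely Lindelöf topological space X of character at most κ, every free sequence has length at most κ. In particular, in a first-countable almost discretely Lindelöf space every free sequence is countable. -/
open Cardinal Set Topology

universe u

/-!
Suppose a free sequence `f` is longer than `κ`; restricting it to an initial segment of type
`κ⁺` keeps it free. The range of a free sequence is discrete, so it lies in a Lindelöf set `L`.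
The tail closures of `f` are closed and every countable family of them meets `L`, because
`κ⁺` has uncountable cofinality; hence some `x ∈ L` lies in all of them. Freeness then puts
`x` outside the closure of every initial segment, so each initial segment is missed by a member
of a base at `x` of size `≤ κ`. As `κ⁺` is regular, one basic neighbourhood misses the whole
sequence, contradicting that `x` is in its closure.
-/

namespace IsFreeSeq

variable {X : Type u} [TopologicalSpace X] {ι : Type u} [LinearOrder ι] {f : ι → X}

theorem comp_strictMono {β : Type u} [LinearOrder β] (hf : IsFreeSeq f) {g : β → ι}
    (hg : StrictMono g) : IsFreeSeq (f ∘ g) := by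
  intro a
  refine subset_empty_iff.1 <| (hf (g a)).subset.trans' <|
    inter_subset_inter (closure_mono ?_) (closure_mono ?_)
  · rw [image_comp]
    exact image_mono (image_subset_iff.2 fun b hb => hg hb)
  · rw [image_comp]
    exact image_mono (image_subset_iff.2 fun b hb => hg.monotone hb)

theorem notMem_closure_image_Iio (hf : IsFreeSeq f) {x : X} {i : ι}
    (hx : x ∈ closure (f '' Ici i)) : x ∉ closure (f '' Iio i) := fun hx' =>
  (hf i).subset ⟨hx', hx⟩

theorem apply_notMem_closure_image_Ioi [WellFoundedLT ι] (hf : IsFreeSeq f) (i : ι) :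
    f i ∉ closure (f '' Ioi i) := by
  let := SuccOrder.ofLinearWellFoundedLT ι
  by_cases hi : IsMax i
  · simp [hi.Ioi_eq]
  rw [← Order.Ici_succ_of_not_isMax hi]
  intro h
  exact hf.notMem_closure_image_Iio h (subset_closure ⟨i, Order.lt_succ_of_not_isMax hi, rfl⟩)

theorem isDiscreteSubset_range [WellFoundedLT ι] (hf : IsFreeSeq f) :
    IsDiscreteSubset (range f) := by
  rintro _ ⟨i, rfl⟩
  refine ⟨(closure (f '' Iio i) ∪ closure (f '' Ioi i))ᶜ,
    (isClosed_closure.union isClosed_closure).isOpen_compl, ?_⟩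
  apply Subset.antisymm
  · rintro _ ⟨hU, j, rfl⟩
    rcases lt_trichotomy j i with h | rfl | h
    · exact (hU (Or.inl (subset_closure ⟨j, h, rfl⟩))).elim
    · rfl
    · exact (hU (Or.inr (subset_closure ⟨j, h, rfl⟩))).elim
  · rintro _ rfl
    refine ⟨?_, i, rfl⟩
    rintro (h | h)
    · exact hf.notMem_closure_image_Iio (subset_closure ⟨i, le_rfl, rfl⟩) h
    · exact hf.apply_notMem_closure_image_Ioi i h

end IsFreeSeq

theorem Order.exists_forall_lt_of_mk_lt_cof {ι : Type u} [LinearOrder ι] {s : Set ι}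
    (hs : #s < Order.cof ι) : ∃ b, ∀ a ∈ s, a < b :=
  not_isCofinal_iff.1 fun h => (Order.cof_le h).not_gt hs

theorem IsLindelof.exists_forall_mem_closure_image_Ici {X : Type u} [TopologicalSpace X]
    {ι : Type u} [LinearOrder ι] {f : ι → X} {L : Set X} (hL : IsLindelof L)
    (hfL : range f ⊆ L) (hcof : ℵ₀ < Order.cof ι) :
    ∃ x ∈ L, ∀ i, x ∈ closure (f '' Ici i) := by
  by_contra! h
  obtain ⟨s, hs, hsL⟩ := hL.elim_countable_subfamily_closed (fun i => closure (f '' Ici i))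
    (fun _ => isClosed_closure) (by ext x; simpa using h x)
  obtain ⟨b, hb⟩ := Order.exists_forall_lt_of_mk_lt_cof (hs.le_aleph0.trans_lt hcof)
  refine hsL.subset ⟨hfL (mem_range_self b), mem_iInter₂.2 fun i hi => ?_⟩
  exact subset_closure ⟨b, (hb i hi).le, rfl⟩

theorem IsFreeSeq.cof_le {X : Type u} [TopologicalSpace X] {ι : Type u} [LinearOrder ι]
    {f : ι → X} (hf : IsFreeSeq f) {κ : Cardinal.{u}} (hκ : ℵ₀ ≤ κ) (hχ : HasCharacterLE X κ)
    {L : Set X} (hL : IsLindelof L) (hfL : range f ⊆ L) : Order.cof ι ≤ κ := by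
  by_contra! hcof
  obtain ⟨x, -, hx⟩ := hL.exists_forall_mem_closure_image_Ici hfL (hκ.trans_lt hcof)
  obtain ⟨B, hBκ, hBx, hB⟩ := hχ x
  have hcover : IsCofinal (⋃ U : B, {i | Disjoint (U : Set X) (f '' Iio i)}) := by
    refine IsCofinal.univ.mono fun i _ => ?_
    obtain ⟨U, hUB, hU⟩ := hB _ (isClosed_closure.isOpen_compl.mem_nhds
      (hf.notMem_closure_image_Iio (hx i)))
    exact mem_iUnion.2 ⟨⟨U, hUB⟩, (subset_compl_iff_disjoint_right.1 hU).mono_right subset_closure⟩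
  -- Pigeonhole against `#B ≤ κ < cof ι`: one basic neighbourhood of `x` misses cofinally many
  -- initial segments, hence all of `range f`, although `x` lies in the closure of every tail.
  obtain ⟨⟨U, hUB⟩, hU⟩ := isCofinal_of_isCofinal_iUnion hcover (hBκ.trans_lt hcof)
  have : Nonempty ι := Order.cof_ne_zero_iff.1 (aleph0_pos.trans (hκ.trans_lt hcof)).ne'
  have : NoTopOrder ι := Order.one_lt_cof_iff.1 (one_lt_aleph0.trans (hκ.trans_lt hcof))
  obtain ⟨_, hjU, j, -, rfl⟩ := mem_closure_iff.1 (hx (Classical.arbitrary ι)) U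
    (hBx U hUB).1 (hBx U hUB).2
  obtain ⟨k, hjk⟩ := exists_not_le j
  obtain ⟨i, hi, hki⟩ := hU k
  exact (hi : Disjoint U _).ne_of_mem hjU ⟨j, (not_le.1 hjk).trans_le hki, rfl⟩ rfl

theorem Cardinal.exists_strictMono_ord_toType {ι : Type u} [LinearOrder ι] [WellFoundedLT ι]
    {c : Cardinal.{u}} (hc : c ≤ #ι) : ∃ g : c.ord.ToType → ι, StrictMono g := by
  have : c.ord ≤ Ordinal.type (α := ι) (· < ·) := by
    rw [Cardinal.ord_le, Ordinal.card_type]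
    exact hc
  rw [← Ordinal.type_toType c.ord, Ordinal.type_le_iff'] at this
  obtain ⟨g⟩ := this
  exact ⟨g, fun _ _ h => g.map_rel_iff.2 h⟩

/-- in an almost discretely Lindelöf space of character at most `κ`,
every free sequence has length at most `κ` (in particular, free sequences in
first-countable such spaces are countable). -/
theorem stmt2 {X : Type u} [TopologicalSpace X] (κ : Cardinal.{u}) (hκ : ℵ₀ ≤ κ)
    (hχ : HasCharacterLE X κ) (hADL : AlmostDiscretelyLindelof X) :
    ∀ (ι : Type u) [LinearOrder ι] [WellFoundedLT ι] (f : ι → X),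
      IsFreeSeq f → #ι ≤ κ := by
  intro ι _ _ f hf
  by_contra! hlt
  obtain ⟨g, hg⟩ := Cardinal.exists_strictMono_ord_toType (Order.succ_le_of_lt hlt)
  have hfg := hf.comp_strictMono hg
  obtain ⟨L, hL, hfgL⟩ := hADL _ hfg.isDiscreteSubset_range
  have hcof := hfg.cof_le hκ hχ hL hfgL
  rw [Ordinal.cof_toType, (Cardinal.isRegular_succ hκ).cof_ord] at hcof
  exact (Order.lt_succ κ).not_ge hcof
end

section
/- Let X be a topological space and κ a cardinal such that every θ-free sequence in X has length at most κ, and for every θ-free sequence F the θ-closure [F]_θ is an intersection of at most 2^κ open sets. Then there is a set A ⊆ X with |A| ≤ 2^κ whose θ-closure is all of X. -/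
open Cardinal Set Topology

universe u

/-!
Closing off along `κ⁺` gives a set `A` with `|A| ≤ 2^κ` such that whenever at most `κ` open sets,
taken from the families that `hψ` attaches to θ-free sequences of length `< κ⁺` in `A`, miss a
point of `X`, they already miss a point of `A`. If `z ∉ [A]_θ`, choose by recursion on `α < κ⁺` a
point `x_α ∈ A` and a member `V_α ∌ z` of the family of `(x_β)_{β<α}`, with `x_α ∉ V_β` for all
`β ≤ α`. Since `[{x_β : β < α}]_θ ⊆ V_α` while the tail from `α` on avoids the open set `V_α`,
the sequence is θ-free of length `κ⁺`, which is impossible.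
-/

section ThetaClosure

variable {X : Type u} [TopologicalSpace X]

theorem thetaClosure_mono {A B : Set X} (h : A ⊆ B) : thetaClosure A ⊆ thetaClosure B :=
  fun _ hx C hC => hx C ⟨h.trans hC.1, hC.2⟩

theorem isThetaFreeSeq_of_open_separation {ι : Type u} [LinearOrder ι] {x : ι → X}
    {V : ι → Set X} (hV : ∀ i, IsOpen (V i)) (hsub : ∀ i, thetaClosure (x '' Iio i) ⊆ V i)
    (hout : ∀ i j, i ≤ j → x j ∉ V i) : IsThetaFreeSeq x := by
  intro i
  refine eq_empty_of_forall_notMem fun y ⟨hy, hy'⟩ => ?_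
  obtain ⟨_, hxV, j, hij, rfl⟩ := mem_closure_iff.1 hy' _ (hV i) (hsub i hy)
  exact hout i j hij hxV

end ThetaClosure

theorem Cardinal.pow_le_two_pow {κ a b : Cardinal.{u}} (hκ : ℵ₀ ≤ κ) (ha : a ≤ 2 ^ κ)
    (hb : b ≤ κ) : a ^ b ≤ 2 ^ κ :=
  calc a ^ b ≤ (2 ^ κ) ^ κ :=
        (power_le_power_right ha).trans (power_le_power_left (power_ne_zero _ two_ne_zero) hb)
  _ = 2 ^ κ := by rw [← power_mul, mul_eq_self hκ]

theorem Cardinal.aleph0_le_two_pow {κ : Cardinal} (hκ : ℵ₀ ≤ κ) : ℵ₀ ≤ 2 ^ κ :=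
  hκ.trans (cantor κ).le

theorem Cardinal.mk_iUnion_le_of_le {α ι : Type u} {c : Cardinal.{u}} (hc : ℵ₀ ≤ c)
    {f : ι → Set α} (hι : #ι ≤ c) (hf : ∀ i, #(f i) ≤ c) : #(⋃ i, f i) ≤ c :=
  (mk_iUnion_le f).trans (mul_le_of_le hc hι (ciSup_le' hf))

section KappaPlus

variable {κ : Cardinal.{u}}

abbrev KappaPlus (κ : Cardinal.{u}) : Type u := (Order.succ κ).ord.ToType

theorem mk_kappaPlus (κ : Cardinal.{u}) : #(KappaPlus κ) = Order.succ κ :=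
  mk_ord_toType _

theorem mk_kappaPlus_le_two_pow : #(KappaPlus κ) ≤ 2 ^ κ := by
  rw [mk_kappaPlus]
  exact Order.succ_le_of_lt (cantor κ)

theorem mk_Iio_kappaPlus_le (i : KappaPlus κ) : #(Iio i) ≤ κ :=
  Order.lt_succ_iff.1 (by simpa using mk_Iio_lt i (by simp))

theorem exists_gt_of_mk_le (hκ : ℵ₀ ≤ κ) {S : Set (KappaPlus κ)} (hS : #S ≤ κ) :
    ∃ a, ∀ b ∈ S, b < a := by
  refine not_isCofinal_iff.1 fun hcof => (Order.lt_succ κ).not_ge ?_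
  calc Order.succ κ = Order.cof (KappaPlus κ) := by
        rw [Ordinal.cof_toType, (isRegular_succ hκ).cof_ord]
  _ ≤ #S := Order.cof_le hcof
  _ ≤ κ := hS

end KappaPlus

section ClosingOff

variable {X : Type u} (κ : Cardinal.{u}) (𝒱 : Set X → Set (Set X))

def ReflectsSmallCovers (A : Set X) : Prop :=
  ∀ B ⊆ A, #B ≤ κ → ∀ 𝒲 ⊆ 𝒱 B, #𝒲 ≤ κ → (⋃₀ 𝒲)ᶜ.Nonempty → (A \ ⋃₀ 𝒲).Nonempty

noncomputable def closingStep (S : Set X) : Set X :=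
  S ∪ ⋃ B : {B : Set X // B ⊆ S ∧ #B ≤ κ},
    range fun 𝒲 : {𝒲 : Set (Set X) // 𝒲 ⊆ 𝒱 B ∧ #𝒲 ≤ κ ∧ (⋃₀ 𝒲)ᶜ.Nonempty} => 𝒲.2.2.2.some

noncomputable def closingStage : KappaPlus κ → Set X :=
  wellFounded_lt.fix fun i stage => closingStep κ 𝒱 (⋃ j : Iio i, stage j j.2)

theorem closingStage_eq (i : KappaPlus κ) :
    closingStage κ 𝒱 i = closingStep κ 𝒱 (⋃ j : Iio i, closingStage κ 𝒱 j) :=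
  wellFounded_lt.fix_eq _ _

variable {κ 𝒱} (hκ : ℵ₀ ≤ κ) (h𝒱 : ∀ B : Set X, #B ≤ κ → #(𝒱 B) ≤ 2 ^ κ)
include hκ h𝒱

theorem mk_closingStep_le {S : Set X} (hS : #S ≤ 2 ^ κ) : #(closingStep κ 𝒱 S) ≤ 2 ^ κ := by
  have h2κ := aleph0_le_two_pow hκ
  refine (mk_union_le _ _).trans (add_le_of_le h2κ hS ?_)
  refine mk_iUnion_le_of_le h2κ ?_ fun B => mk_range_le.trans ?_
  · exact (mk_bounded_subset_le S κ).trans (pow_le_two_pow hκ (max_le hS h2κ) le_rfl)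
  · refine (mk_subtype_mono (q := fun 𝒲 => 𝒲 ⊆ 𝒱 B ∧ #𝒲 ≤ κ) fun _ h => ⟨h.1, h.2.1⟩).trans ?_
    exact (mk_bounded_subset_le _ κ).trans
      (pow_le_two_pow hκ (max_le (h𝒱 B B.2.2) h2κ) le_rfl)

theorem mk_closingStage_le (i : KappaPlus κ) : #(closingStage κ 𝒱 i) ≤ 2 ^ κ := by
  induction i using WellFoundedLT.induction with
  | _ i ih =>
    rw [closingStage_eq]
    exact mk_closingStep_le hκ h𝒱 <| mk_iUnion_le_of_le (aleph0_le_two_pow hκ)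
      ((mk_Iio_kappaPlus_le i).trans (cantor κ).le) fun j => ih j j.2

theorem exists_reflectsSmallCovers : ∃ A : Set X, #A ≤ 2 ^ κ ∧ ReflectsSmallCovers κ 𝒱 A := by
  refine ⟨⋃ i, closingStage κ 𝒱 i, mk_iUnion_le_of_le (aleph0_le_two_pow hκ)
    mk_kappaPlus_le_two_pow (mk_closingStage_le hκ h𝒱), ?_⟩
  intro B hB hBκ 𝒲 h𝒲 h𝒲κ hne
  choose t ht using fun b : B => mem_iUnion.1 (hB b.2)
  obtain ⟨i, hi⟩ := exists_gt_of_mk_le hκ (mk_range_le.trans hBκ)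
  have hBi : B ⊆ ⋃ j : Iio i, closingStage κ 𝒱 j := fun b hb =>
    mem_iUnion.2 ⟨⟨t ⟨b, hb⟩, hi _ (mem_range_self _)⟩, ht ⟨b, hb⟩⟩
  refine ⟨hne.some, mem_iUnion.2 ⟨i, ?_⟩, hne.some_mem⟩
  rw [closingStage_eq]
  exact Or.inr (mem_iUnion.2 ⟨⟨B, hBi, hBκ⟩, ⟨𝒲, h𝒲, h𝒲κ, hne⟩, rfl⟩)

end ClosingOff

theorem exists_seq_of_forall_extend {ι α : Type*} [Preorder ι] [WellFoundedLT ι]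
    [Nonempty α] (P : ∀ i : ι, (Iio i → α) → α → Prop)
    (h : ∀ i (g : Iio i → α), (∀ j : Iio i, P j (g ∘ inclusion (Iio_subset_Iio j.2.le)) (g j)) →
      ∃ a, P i g a) :
    ∃ f : ι → α, ∀ i, P i (fun k : Iio i => f k) (f i) := by
  obtain ⟨f, hf⟩ : ∃ f : ι → α, ∀ i, f i = Classical.epsilon (P i fun k : Iio i => f k) :=
    ⟨wellFounded_lt.fix fun i f => Classical.epsilon (P i fun k => f k k.2),
      fun i => wellFounded_lt.fix_eq _ _⟩
  refine ⟨f, fun i => ?_⟩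
  induction i using WellFoundedLT.induction with
  | _ i ih =>
    rw [hf i]
    exact Classical.epsilon_spec (h i (fun k => f k) fun j => ih j j.2)

theorem image_Iio_subtype_eq_range {ι α : Type*} [Preorder ι] {i : ι} (x : Iio i → α)
    (j : Iio i) :
    x '' Iio j = range (x ∘ inclusion (Iio_subset_Iio j.2.le)) := by
  ext y
  constructor
  · rintro ⟨k, hk, rfl⟩
    exact ⟨⟨k, hk⟩, rfl⟩
  · rintro ⟨k, rfl⟩
    exact ⟨_, k.2, rfl⟩

section LongSequence

variable {X : Type u} {κ : Cardinal.{u}}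
  (𝒰 : ∀ i : KappaPlus κ, (Iio i → X) → Set (Set X))

def seqFamily (B : Set X) : Set (Set X) :=
  ⋃ (i : KappaPlus κ) (g : Iio i → B), 𝒰 i (Subtype.val ∘ g)

variable {𝒰}

theorem mem_seqFamily {B : Set X} {i : KappaPlus κ} {g : Iio i → X} (hg : range g ⊆ B)
    {V : Set X} (hV : V ∈ 𝒰 i g) : V ∈ seqFamily 𝒰 B :=
  mem_iUnion₂.2 ⟨i, codRestrict g B (range_subset_iff.1 hg), hV⟩

theorem mk_seqFamily_le (hκ : ℵ₀ ≤ κ) (h𝒰 : ∀ i g, #(𝒰 i g) ≤ 2 ^ κ) {B : Set X}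
    (hB : #B ≤ κ) : #(seqFamily 𝒰 B) ≤ 2 ^ κ := by
  have h2κ := aleph0_le_two_pow hκ
  refine mk_iUnion_le_of_le h2κ mk_kappaPlus_le_two_pow
    fun i => mk_iUnion_le_of_le h2κ ?_ fun g => h𝒰 i _
  rw [← power_def]
  exact pow_le_two_pow hκ (hB.trans (cantor κ).le) (mk_Iio_kappaPlus_le i)

-- `g` lists the pairs `(x_j, V_j)` for `j < i`, and `p = (x_i, V_i)` is a candidate next pair.
variable (𝒰) (A : Set X) (z : X) in
def Admissible (i : KappaPlus κ) (g : Iio i → X × Set X) (p : X × Set X) : Prop :=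
  p.2 ∈ 𝒰 i (Prod.fst ∘ g) ∧ z ∉ p.2 ∧ p.1 ∈ A ∧ p.1 ∉ p.2 ∧ ∀ j, p.1 ∉ (g j).2

variable [TopologicalSpace X] (h𝒰open : ∀ i g, ∀ U ∈ 𝒰 i g, IsOpen U)
  (h𝒰sub : ∀ i g, thetaClosure (range g) ⊆ ⋂₀ 𝒰 i g)
  (h𝒰eq : ∀ i g, IsThetaFreeSeq g → ⋂₀ 𝒰 i g ⊆ thetaClosure (range g))
  {A : Set X} (hA : ReflectsSmallCovers κ (seqFamily 𝒰) A) {z : X} (hz : z ∉ thetaClosure A)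
include h𝒰open h𝒰sub h𝒰eq hA hz

theorem exists_admissible (hκ : ℵ₀ ≤ κ) (i : KappaPlus κ) (g : Iio i → X × Set X)
    (hg : ∀ j : Iio i, Admissible 𝒰 A z j (g ∘ inclusion (Iio_subset_Iio j.2.le)) (g j)) :
    ∃ p, Admissible 𝒰 A z i g p := by
  set x := Prod.fst ∘ g
  have hfree : IsThetaFreeSeq x := by
    refine isThetaFreeSeq_of_open_separation (V := fun j => (g j).2)
      (fun j => h𝒰open _ _ _ (hg j).1) (fun j => ?_) fun j k hjk => ?_
    · rw [image_Iio_subtype_eq_range]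
      exact (h𝒰sub _ _).trans (sInter_subset_of_mem (hg j).1)
    · rcases hjk.eq_or_lt with rfl | hjk
      · exact (hg j).2.2.2.1
      · exact (hg k).2.2.2.2 ⟨j, hjk⟩
  have hxA : range x ⊆ A := range_subset_iff.2 fun j => (hg j).2.2.1
  obtain ⟨V, hV, hzV⟩ : ∃ V ∈ 𝒰 i x, z ∉ V := by
    by_contra! h
    exact hz (thetaClosure_mono hxA (h𝒰eq i x hfree fun V hV => h V hV))
  set 𝒲 := insert V (range fun j => (g j).2)
  have h𝒲 : 𝒲 ⊆ seqFamily 𝒰 (range x) := by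
    refine insert_subset (mem_seqFamily subset_rfl hV) (range_subset_iff.2 fun j => ?_)
    exact mem_seqFamily (range_subset_iff.2 fun k => mem_range_self _) (hg j).1
  have h𝒲κ : #𝒲 ≤ κ := calc
    #𝒲 ≤ #(range fun j => (g j).2) + 1 := mk_insert_le
    _ ≤ κ + 1 := by gcongr; exact mk_range_le.trans (mk_Iio_kappaPlus_le i)
    _ = κ := add_one_eq hκ
  have hz𝒲 : z ∉ ⋃₀ 𝒲 := by
    rintro ⟨W, hW | ⟨j, rfl⟩, hzW⟩
    exacts [hzV (hW ▸ hzW), (hg j).2.1 hzW]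
  obtain ⟨y, hyA, hy𝒲⟩ :=
    hA (range x) hxA (mk_range_le.trans (mk_Iio_kappaPlus_le i)) 𝒲 h𝒲 h𝒲κ ⟨z, hz𝒲⟩
  exact ⟨(y, V), hV, hzV, hyA, fun h => hy𝒲 ⟨V, mem_insert _ _, h⟩,
    fun j h => hy𝒲 ⟨_, mem_insert_of_mem _ ⟨j, rfl⟩, h⟩⟩

theorem exists_thetaFreeSeq_kappaPlus (hκ : ℵ₀ ≤ κ) :
    ∃ x : KappaPlus κ → X, IsThetaFreeSeq x := by
  have : Nonempty X := ⟨z⟩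
  obtain ⟨f, hf⟩ := exists_seq_of_forall_extend (Admissible 𝒰 A z)
    (exists_admissible h𝒰open h𝒰sub h𝒰eq hA hz hκ)
  refine ⟨Prod.fst ∘ f, isThetaFreeSeq_of_open_separation (V := fun j => (f j).2)
    (fun j => h𝒰open _ _ _ (hf j).1) (fun j => ?_) fun j k hjk => ?_⟩
  · rw [image_eq_range]
    exact (h𝒰sub _ _).trans (sInter_subset_of_mem (hf j).1)
  · rcases hjk.eq_or_lt with rfl | hjk
    · exact (hf j).2.2.2.1
    · exact (hf k).2.2.2.2 ⟨j, hjk⟩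

end LongSequence

/-- if every θ-free sequence has length at most `κ` and the θ-closure
of (the range of) every θ-free sequence is an intersection of at most `2^κ` open
sets, then `X` has a θ-dense subset of cardinality at most `2^κ`. -/
theorem stmt4 {X : Type u} [TopologicalSpace X] (κ : Cardinal.{u}) (hκ : ℵ₀ ≤ κ)
    (hF : ∀ (ι : Type u) [LinearOrder ι] [WellFoundedLT ι] (f : ι → X),
      IsThetaFreeSeq f → #ι ≤ κ)
    (hψ : ∀ (ι : Type u) [LinearOrder ι] [WellFoundedLT ι] (f : ι → X),
      IsThetaFreeSeq f → ∃ 𝒰 : Set (Set X), #𝒰 ≤ 2 ^ κ ∧ (∀ U ∈ 𝒰, IsOpen U) ∧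
        thetaClosure (Set.range f) = ⋂₀ 𝒰) :
    ∃ A : Set X, #A ≤ 2 ^ κ ∧ thetaClosure A = Set.univ := by
  -- `⋂₀ ∅ = univ`, so `∅` serves as the family of a sequence that is not θ-free.
  have h𝒰 : ∀ (i : KappaPlus κ) (g : Iio i → X), ∃ 𝒰 : Set (Set X), #𝒰 ≤ 2 ^ κ ∧
      (∀ U ∈ 𝒰, IsOpen U) ∧ thetaClosure (range g) ⊆ ⋂₀ 𝒰 ∧
      (IsThetaFreeSeq g → ⋂₀ 𝒰 ⊆ thetaClosure (range g)) := by
    intro i g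
    by_cases hg : IsThetaFreeSeq g
    · obtain ⟨𝒰, h𝒰card, h𝒰open, h𝒰eq⟩ := hψ _ g hg
      exact ⟨𝒰, h𝒰card, h𝒰open, h𝒰eq.le, fun _ => h𝒰eq.ge⟩
    · exact ⟨∅, by simp, by simp, by simp, fun h => absurd h hg⟩
  choose 𝒰 h𝒰card h𝒰open h𝒰sub h𝒰eq using h𝒰
  obtain ⟨A, hAcard, hA⟩ := exists_reflectsSmallCovers hκ fun B => mk_seqFamily_le hκ h𝒰card
  refine ⟨A, hAcard, eq_univ_of_forall fun z => by_contra fun hz => ?_⟩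
  obtain ⟨x, hx⟩ := exists_thetaFreeSeq_kappaPlus h𝒰open h𝒰sub h𝒰eq hA hz hκ
  exact (hF _ x hx).not_gt (mk_kappaPlus κ ▸ Order.lt_succ κ)
end

section
/- Assume 2^{<𝔠} = 𝔠. Let X be a Hausdorff sequential almost discretely Lindelöf space such that every point of X is the intersection of at most 𝔠 open sets (ψ(X) ≤ 𝔠). Then |X| ≤ 𝔠. -/
/-!
Close off under `𝔠` steps. Since `2^{<𝔠} = 𝔠`, the continuum is regular and `𝔠^{<𝔠} = 𝔠`, so
there is a sequentially closed (hence closed) set `A` with `|A| ≤ 𝔠` that reflects covers: if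
`E ⊆ A` has size `< 𝔠`, `V` is a union of pseudobase elements at the points of `E`, and
`A ⊆ cl E ∪ V`, then `cl E ∪ V = X`.

Suppose `p ∉ A`. For `a ∈ A` pick a pseudobase element `f a` missing `p`, and list the countable
subsets of `A` as `N_α`, `α < 𝔠`. Recursively pick `x_α ∈ A` outside `cl {x_β | β < α}` and outside
`f y` for every `y ∈ {x_β | β < α} ∪ N_α`. If the recursion stops at `α`, reflection for
`E = {x_β | β < α} ∪ N_α` puts `p` into `cl E ⊆ A` or into some `f y`, which is impossible.
Otherwise `{x_α}` is discrete, so it lies in a Lindelöf `L`. Countably many `f a` cover `L ∩ A`,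
and their centres form some `N_α`; this forces `x_α` into one of the `f y` excluded at stage `α`.
-/

open Cardinal Set Topology

universe u

namespace Cardinal

theorem isRegular_of_powerlt_le {κ : Cardinal.{u}} (hκ : ℵ₀ ≤ κ) (h : κ ^< κ ≤ κ) :
    κ.IsRegular :=
  ⟨hκ, not_lt.1 fun hcof => (lt_power_cof_ord hκ).not_ge ((le_powerlt κ hcof).trans h)⟩

theorem continuum_powerlt_continuum_le (h : ∀ κ : Cardinal.{u}, κ < 𝔠 → 2 ^ κ ≤ 𝔠) :
    (𝔠 : Cardinal.{u}) ^< 𝔠 ≤ 𝔠 := by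
  refine powerlt_le.2 fun κ hκ => ?_
  calc (𝔠 : Cardinal.{u}) ^ κ ≤ 𝔠 ^ max κ ℵ₀ :=
        power_le_power_left continuum_ne_zero (le_max_left _ _)
    _ = 2 ^ max κ ℵ₀ := by rw [← two_power_aleph0, ← power_mul, aleph0_mul_eq (le_max_right _ _)]
    _ ≤ 𝔠 := h _ (max_lt hκ aleph0_lt_continuum)

theorem mk_iUnion_le_of_le_s6 {α ι : Type u} {κ : Cardinal.{u}} (hκ : ℵ₀ ≤ κ) {f : ι → Set α}
    (hι : #ι ≤ κ) (hf : ∀ i, #(f i) ≤ κ) : #(⋃ i, f i) ≤ κ :=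
  (mk_iUnion_le f).trans (mul_le_of_le hκ hι (ciSup_le' hf))

theorem mk_Iio_ord_toType_lt {κ : Cardinal.{u}} (i : κ.ord.ToType) : #(Iio i) < κ := by
  simpa using mk_Iio_lt i

theorem exists_mk_Iio_ord_toType_eq {κ μ : Cardinal.{u}} (h : μ < κ) :
    ∃ i : κ.ord.ToType, #(Iio i) = μ := by
  have hμ : μ.ord ∈ Iio κ.ord := ord_lt_ord.2 h
  have htypein : Ordinal.typein (α := κ.ord.ToType) (· < ·) (Ordinal.ToType.mk ⟨_, hμ⟩) = μ.ord :=
    congrArg Subtype.val (Ordinal.ToType.mk.symm_apply_apply ⟨_, hμ⟩)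
  exact ⟨_, (congrArg Ordinal.card htypein).trans (card_ord μ)⟩

theorem IsRegular.exists_forall_lt_of_mk_lt {κ : Cardinal.{u}} (hκ : κ.IsRegular)
    {s : Set κ.ord.ToType} (hs : #s < κ) : ∃ i, ∀ j ∈ s, j < i := by
  by_contra h
  have := Order.cof_le (not_not.1 (mt not_isCofinal_iff.1 h))
  rw [Ordinal.cof_toType, hκ.cof_ord] at this
  exact this.not_gt hs

theorem mk_subset_mk_lt_le {X : Type u} {κ : Cardinal.{u}} (hκ : ℵ₀ ≤ κ) (hpow : κ ^< κ ≤ κ)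
    {S : Set X} (hS : #S ≤ κ) : #{E : Set X | E ⊆ S ∧ #E < κ} ≤ κ := by
  have hsub : {E : Set X | E ⊆ S ∧ #E < κ} ⊆
      ⋃ i : κ.ord.ToType, {E : Set X | E ⊆ S ∧ #E ≤ #(Iio i)} := by
    rintro E ⟨hES, hEκ⟩
    obtain ⟨i, hi⟩ := exists_mk_Iio_ord_toType_eq hEκ
    exact mem_iUnion.2 ⟨i, hES, hi.ge⟩
  refine (mk_le_mk_of_subset hsub).trans (mk_iUnion_le_of_le_s6 hκ (mk_ord_toType κ).le fun i => ?_)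
  calc #{E : Set X | E ⊆ S ∧ #E ≤ #(Iio i)} ≤ max #S ℵ₀ ^ #(Iio i) := mk_bounded_subset_le S _
    _ ≤ κ ^ #(Iio i) := power_le_power_right (max_le hS hκ)
    _ ≤ κ := (le_powerlt κ (mk_Iio_ord_toType_lt i)).trans hpow

theorem exists_enum_countable_subsets {X : Type u} {κ : Cardinal.{u}} (hκ : ℵ₀ < κ)
    (hpow : κ ^< κ ≤ κ) {A : Set X} (hA : #A ≤ κ) :
    ∃ e : κ.ord.ToType → Set X, (∀ i, e i ⊆ A ∧ (e i).Countable) ∧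
      ∀ N ⊆ A, N.Countable → ∃ i, e i = N := by
  let 𝒩 := {N : Set X | N ⊆ A ∧ N.Countable}
  have h𝒩_sub : 𝒩 ⊆ {E : Set X | E ⊆ A ∧ #E < κ} := fun N hN =>
    ⟨hN.1, hN.2.le_aleph0.trans_lt hκ⟩
  have h𝒩 : #𝒩 ≤ #κ.ord.ToType := by
    simpa using (mk_le_mk_of_subset h𝒩_sub).trans (mk_subset_mk_lt_le hκ.le hpow hA)
  have : Nonempty 𝒩 := Set.Nonempty.to_subtype ⟨∅, empty_subset A, countable_empty⟩
  obtain ⟨j⟩ := (le_def _ _).1 h𝒩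
  refine ⟨fun i => (Function.invFun j i : 𝒩), fun i => (Function.invFun j i).2, fun N hNA hN => ?_⟩
  obtain ⟨i, hi⟩ := Function.invFun_surjective j.injective ⟨N, hNA, hN⟩
  exact ⟨i, congrArg Subtype.val hi⟩

theorem mk_setOf_union_biUnion_le {X : Type u} {κ : Cardinal.{u}} (hpow : κ ^< κ ≤ κ)
    (𝒰 : X → Set (Set X)) (h𝒰 : ∀ x, #(𝒰 x) ≤ κ) (B : Set X) {E : Set X} (hE : #E < κ) :
    #{G : Set X | ∃ g : X → Set X, (∀ y ∈ E, g y ∈ 𝒰 y) ∧ G = B ∪ ⋃ y ∈ E, g y} ≤ κ := by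
  have hsub : {G : Set X | ∃ g : X → Set X, (∀ y ∈ E, g y ∈ 𝒰 y) ∧ G = B ∪ ⋃ y ∈ E, g y} ⊆
      range fun s : (y : E) → 𝒰 y => B ∪ ⋃ y, (s y : Set X) := by
    rintro _ ⟨g, hg, rfl⟩
    exact ⟨fun y => ⟨g y, hg y y.2⟩, by rw [biUnion_eq_iUnion]⟩
  calc _ ≤ #((y : E) → 𝒰 y) := (mk_le_mk_of_subset hsub).trans mk_range_le
    _ = prod fun y : E => #(𝒰 y) := mk_pi _
    _ ≤ prod fun _ : E => κ := prod_le_prod _ _ fun y => h𝒰 y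
    _ = κ ^ #E := prod_const' _ _
    _ ≤ κ := (le_powerlt κ hE).trans hpow

-- The stages are indexed by `κ.ord.ToType`; by regularity of `κ`, a small subset of the union
-- already lies in the union of the stages below some index.
theorem exists_mk_le_closed_under_mk_lt {X : Type u} {κ : Cardinal.{u}} (hκ : ℵ₀ ≤ κ)
    (hpow : κ ^< κ ≤ κ) (F : Set X → Set X) (hF : ∀ E : Set X, #E < κ → #(F E) ≤ κ) :
    ∃ A : Set X, #A ≤ κ ∧ ∀ E ⊆ A, #E < κ → F E ⊆ A := by
  let G : Set X → Set X := fun S => ⋃ E : {E : Set X | E ⊆ S ∧ #E < κ}, F E.1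
  have hG : ∀ S : Set X, #S ≤ κ → #(G S) ≤ κ := fun S hS =>
    mk_iUnion_le_of_le_s6 hκ (mk_subset_mk_lt_le hκ hpow hS) fun E => hF E E.2.2
  let stage : κ.ord.ToType → Set X := WellFoundedLT.fix fun i stage => G (⋃ j : Iio i, stage j j.2)
  have hstage : ∀ i, stage i = G (⋃ j : Iio i, stage j) := WellFoundedLT.fix_eq _
  have hstage_card : ∀ i, #(stage i) ≤ κ := fun i => by
    induction i using WellFoundedLT.induction with
    | ind i IH =>
      rw [hstage]
      exact hG _ (mk_iUnion_le_of_le_s6 hκ (mk_Iio_ord_toType_lt i).le fun j => IH j j.2)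
  refine ⟨⋃ i, stage i, mk_iUnion_le_of_le_s6 hκ (mk_ord_toType κ).le hstage_card, ?_⟩
  intro E hE hEκ
  choose g hg using fun e : E => mem_iUnion.1 (hE e.2)
  obtain ⟨i, hi⟩ := (isRegular_of_powerlt_le hκ hpow).exists_forall_lt_of_mk_lt
    (mk_range_le.trans_lt hEκ)
  have hEi : E ⊆ ⋃ j : Iio i, stage j := fun e he =>
    mem_iUnion.2 ⟨⟨g ⟨e, he⟩, hi _ (mem_range_self _)⟩, hg _⟩
  calc F E ⊆ G (⋃ j : Iio i, stage j) := subset_iUnion_of_subset ⟨E, hEi, hEκ⟩ subset_rfl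
    _ = stage i := (hstage i).symm
    _ ⊆ ⋃ i, stage i := subset_iUnion _ i

end Cardinal

theorem WellFoundedLT.exists_greedy_seq {ι X : Type*} [LinearOrder ι] [WellFoundedLT ι]
    [Nonempty X] (C : ι → Set X → Set X) :
    ∃ x : ι → X, (∀ i, x i ∈ C i (x '' Iio i)) ∨
      ∃ i, C i (x '' Iio i) = ∅ ∧ ∀ j < i, x j ∈ C j (x '' Iio j) := by
  classical
  let x : ι → X := WellFoundedLT.fix fun i x =>
    if h : (C i (range fun j : Iio i => x j j.2)).Nonempty then h.some else Classical.arbitrary X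
  have hfix : ∀ i, x i = if h : (C i (range fun j : Iio i => x j)).Nonempty then h.some
      else Classical.arbitrary X := WellFoundedLT.fix_eq _
  have hx : ∀ i, (C i (x '' Iio i)).Nonempty → x i ∈ C i (x '' Iio i) := fun i hi => by
    rw [image_eq_range] at hi ⊢
    rw [hfix i, dif_pos hi]
    exact hi.some_mem
  refine ⟨x, ?_⟩
  by_cases h : ∃ i, C i (x '' Iio i) = ∅
  · obtain ⟨i, hi, hmin⟩ := wellFounded_lt.has_min _ h
    exact Or.inr ⟨i, hi, fun j hj => hx j (nonempty_iff_ne_empty.2 fun hj' => hmin j hj' hj)⟩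
  · exact Or.inl fun i => hx i (nonempty_iff_ne_empty.2 fun hi => h ⟨i, hi⟩)

section Topology

variable {X : Type u} [TopologicalSpace X]

theorem mk_seqClosure_le [T2Space X] (S : Set X) : #(seqClosure S) ≤ #S ^ ℵ₀ := by
  have : ∀ y : seqClosure S, ∃ s : ℕ → S,
      Filter.Tendsto (fun n => (s n : X)) Filter.atTop (𝓝 y) := by
    rintro ⟨y, s, hs, hsy⟩
    exact ⟨fun n => ⟨s n, hs n⟩, hsy⟩
  choose s hs using this
  have hinj : Function.Injective s := fun y z h =>
    Subtype.ext (tendsto_nhds_unique (hs y) (h ▸ hs z))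
  simpa using mk_le_of_injective hinj

theorem exists_isSeqClosed_forall_subset_eq_univ [T2Space X] {κ : Cardinal.{u}} (hκ : ℵ₀ < κ)
    (hpow : κ ^< κ ≤ κ) (𝒢 : Set X → Set (Set X)) (h𝒢 : ∀ E : Set X, #E < κ → #(𝒢 E) ≤ κ) :
    ∃ A : Set X, #A ≤ κ ∧ IsSeqClosed A ∧
      ∀ E ⊆ A, #E < κ → ∀ G ∈ 𝒢 E, A ⊆ G → G = Set.univ := by
  choose w hw using fun G : {G : Set X // G ≠ Set.univ} => (ne_univ_iff_exists_notMem _).1 G.2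
  let F : Set X → Set X := fun E => seqClosure E ∪ w '' (Subtype.val ⁻¹' 𝒢 E)
  have hF : ∀ E : Set X, #E < κ → #(F E) ≤ κ := fun E hE => by
    refine (mk_union_le _ _).trans (add_le_of_le hκ.le ?_ ?_)
    · calc #(seqClosure E) ≤ #E ^ ℵ₀ := mk_seqClosure_le E
        _ ≤ κ ^ ℵ₀ := power_le_power_right hE.le
        _ ≤ κ := (le_powerlt κ hκ).trans hpow
    · exact mk_image_le.trans ((mk_preimage_of_injective _ _ Subtype.val_injective).trans (h𝒢 E hE))
  obtain ⟨A, hAκ, hA⟩ := exists_mk_le_closed_under_mk_lt hκ.le hpow F hF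
  refine ⟨A, hAκ, fun u p hu hup => ?_, fun E hEA hE G hG hAG => ?_⟩
  · have hrange : #(range u) < κ := (countable_range u).le_aleph0.trans_lt hκ
    exact hA _ (range_subset_iff.2 hu) hrange (Or.inl ⟨u, mem_range_self, hup⟩)
  · by_contra hne
    exact hw ⟨G, hne⟩ (hAG (hA E hEA hE (Or.inr (mem_image_of_mem w hG))))

theorem isDiscreteSubset_range_of_forall_lt {ι : Type*} [LinearOrder ι] (x : ι → X)
    (f : X → Set X) (hf : ∀ i, IsOpen (f (x i)) ∧ x i ∈ f (x i))
    (hcl : ∀ i, x i ∉ closure (x '' Iio i)) (hf_lt : ∀ i, ∀ j < i, x i ∉ f (x j)) :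
    IsDiscreteSubset (range x) := by
  rintro _ ⟨i, rfl⟩
  refine ⟨f (x i) ∩ (closure (x '' Iio i))ᶜ, (hf i).1.inter isClosed_closure.isOpen_compl,
    Subset.antisymm ?_ (singleton_subset_iff.2 ⟨⟨(hf i).2, hcl i⟩, mem_range_self i⟩)⟩
  rintro _ ⟨⟨hfi, hcli⟩, ⟨k, rfl⟩⟩
  rcases lt_trichotomy k i with hki | rfl | hik
  · exact (hcli (subset_closure (mem_image_of_mem x hki))).elim
  · rfl
  · exact (hf_lt k i hik hfi).elim

theorem AlmostDiscretelyLindelof.not_forall_mem_diff (hX : AlmostDiscretelyLindelof X)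
    {ι : Type*} [LinearOrder ι] {A : Set X} (hA : IsClosed A) (f : X → Set X)
    (hf : ∀ a ∈ A, IsOpen (f a) ∧ a ∈ f a) (e : ι → Set X)
    (he : ∀ N ⊆ A, N.Countable → ∃ i, e i = N) (x : ι → X) :
    ¬ ∀ i, x i ∈ A \ (closure (x '' Iio i) ∪ ⋃ y ∈ x '' Iio i ∪ e i, f y) := by
  intro hx
  have hxA : ∀ i, x i ∈ A := fun i => (hx i).1
  have hD : IsDiscreteSubset (range x) :=
    isDiscreteSubset_range_of_forall_lt x f (fun i => hf _ (hxA i))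
      (fun i hi => (hx i).2 (Or.inl hi))
      (fun i j hji hxi => (hx i).2 (Or.inr (mem_biUnion (Or.inl (mem_image_of_mem x hji)) hxi)))
  obtain ⟨L, hL, hDL⟩ := hX _ hD
  obtain ⟨N, hNc, hNLA, hLAN⟩ := (hL.inter_right hA).elim_nhds_subcover f
    fun a ha => (hf a ha.2).1.mem_nhds (hf a ha.2).2
  obtain ⟨i, rfl⟩ := he N (fun a ha => (hNLA a ha).2) hNc
  obtain ⟨y, hy, hxy⟩ := mem_iUnion₂.1 (hLAN ⟨hDL (mem_range_self i), hxA i⟩)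
  exact (hx i).2 (Or.inr (mem_biUnion (Or.inr hy) hxy))

theorem AlmostDiscretelyLindelof.eq_univ_of_forall_subset_eq_univ
    (hX : AlmostDiscretelyLindelof X) {κ : Cardinal.{u}} (hκ : ℵ₀ < κ) (hpow : κ ^< κ ≤ κ)
    (𝒰 : X → Set (Set X)) (h𝒰 : ∀ x, ∀ U ∈ 𝒰 x, IsOpen U ∧ x ∈ U) (h𝒰x : ∀ x, ⋂₀ 𝒰 x = {x})
    {A : Set X} (hA : IsClosed A) (hAκ : #A ≤ κ)
    (hrefl : ∀ E ⊆ A, #E < κ → ∀ g : X → Set X, (∀ y ∈ E, g y ∈ 𝒰 y) →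
      A ⊆ closure E ∪ ⋃ y ∈ E, g y → closure E ∪ ⋃ y ∈ E, g y = Set.univ) :
    A = Set.univ := by
  refine eq_univ_of_forall fun p => by_contra fun hp => ?_
  have : Nonempty X := ⟨p⟩
  have hsep : ∀ x ∈ A, ∃ U ∈ 𝒰 x, p ∉ U := fun x hx => by
    by_contra! h
    have hpx : p ∈ ({x} : Set X) := h𝒰x x ▸ mem_sInter.2 h
    exact hp (eq_of_mem_singleton hpx ▸ hx)
  choose! f hf𝒰 hfp using hsep
  obtain ⟨e, heA, he⟩ := exists_enum_countable_subsets hκ hpow hAκ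
  let C : κ.ord.ToType → Set X → Set X := fun i S => A \ (closure S ∪ ⋃ y ∈ S ∪ e i, f y)
  obtain ⟨x, hx | ⟨i, hi, hlt⟩⟩ := WellFoundedLT.exists_greedy_seq C
  · exact hX.not_forall_mem_diff hA f (fun a ha => h𝒰 a _ (hf𝒰 a ha)) e he x hx
  let E := x '' Iio i ∪ e i
  have hEA : E ⊆ A := union_subset (image_subset_iff.2 fun j hj => (hlt j hj).1) (heA i).1
  have hEκ : #E < κ := (mk_union_le _ _).trans_lt <| add_lt_of_lt hκ.le
    (mk_image_le.trans_lt (mk_Iio_ord_toType_lt i)) ((heA i).2.le_aleph0.trans_lt hκ)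
  have hAE : A ⊆ closure E ∪ ⋃ y ∈ E, f y := fun a ha => by_contra fun h =>
    eq_empty_iff_forall_notMem.1 hi a
      ⟨ha, fun h' => h (h'.imp_left (closure_mono subset_union_left ·))⟩
  rcases hrefl E hEA hEκ f (fun y hy => hf𝒰 y (hEA hy)) hAE ▸ mem_univ p with hpE | hpE
  · exact hp (closure_minimal hEA hA hpE)
  · obtain ⟨y, hy, hpy⟩ := mem_iUnion₂.1 hpE
    exact hfp y (hEA hy) hpy

end Topology

/-- (2^{<𝔠} = 𝔠) a Hausdorff sequential almost discretely Lindelöf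
space with pseudocharacter at most `𝔠` has cardinality at most `𝔠`. -/
theorem stmt6 {X : Type u} [TopologicalSpace X] [T2Space X] [SequentialSpace X]
    (hch : ∀ κ : Cardinal.{u}, κ < Cardinal.continuum → 2 ^ κ ≤ Cardinal.continuum)
    (hADL : AlmostDiscretelyLindelof X)
    (hψ : ∀ x : X, ∃ 𝒰 : Set (Set X), #𝒰 ≤ Cardinal.continuum ∧
      (∀ U ∈ 𝒰, IsOpen U ∧ x ∈ U) ∧ ⋂₀ 𝒰 = {x}) :
    #X ≤ Cardinal.continuum := by
  choose 𝒰 h𝒰κ h𝒰 h𝒰x using hψ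
  have hpow := continuum_powerlt_continuum_le hch
  obtain ⟨A, hAκ, hAseq, hrefl⟩ := exists_isSeqClosed_forall_subset_eq_univ aleph0_lt_continuum
    hpow (fun E => {G | ∃ g : X → Set X, (∀ y ∈ E, g y ∈ 𝒰 y) ∧ G = closure E ∪ ⋃ y ∈ E, g y})
    fun E hE => mk_setOf_union_biUnion_le hpow 𝒰 h𝒰κ _ hE
  have hA : A = Set.univ := hADL.eq_univ_of_forall_subset_eq_univ aleph0_lt_continuum hpow 𝒰 h𝒰
    h𝒰x hAseq.isClosed hAκ fun E hEA hE g hg => hrefl E hEA hE _ ⟨g, hg, rfl⟩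
  rwa [← mk_univ, ← hA]
end

section
/- Let X be a Hausdorff cellular-Lindelöf first-countable space. Then every family of pairwise disjoint nonempty open subsets of X has cardinality at most the continuum, i.e., c(X) ≤ 𝔠. -/
open Cardinal Set Topology

universe u

/-!
A cellular family `𝒰` met by a Lindelöf subspace `L` injects into `L` (pick a point of `L` in
each member), so it suffices that `#L ≤ 𝔠`: Arhangel'skii's theorem for the Lindelöf,
first-countable Hausdorff space `L`.

For Arhangel'skii's theorem, fix a countable neighbourhood base `b x n` at every point and
close a point under two countable-arity operations: limits of convergent sequences (unique,
by Hausdorffness) and, for each countable family of basic sets centred in the set built so far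
that fails to cover the space, a point outside it. Iterating `ω₁` times keeps the size at most
`𝔠 ^ ℵ₀ = 𝔠`, and regularity of `ω₁` makes the result `A` closed under both operations. By
first countability `A` is closed, hence Lindelöf; if some `q ∉ A`, countably many basic sets
centred in `A` and missing `q` cover `A`, contradicting closure under the second operation.
-/

open Filter

theorem mk_nat_arrow_le_continuum {α : Type u} (h : #α ≤ 𝔠) : #(ℕ → α) ≤ 𝔠 := by
  simpa [mk_arrow, continuum_power_aleph0] using power_le_power_right (c := ℵ₀) h

section CountableOpClosure

open Ordinal

variable {Y : Type u} (s : Set Y) (op : (ℕ → Y) → Set Y)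

def countableOpClosureStage (i : Ordinal.{u}) : Set Y :=
  let S := ⋃ j < i, countableOpClosureStage j
  s ∪ ⋃ v : ℕ → S, op fun n => v n
termination_by i

def countableOpClosure : Set Y :=
  ⋃ i < (ω₁ : Ordinal.{u}), countableOpClosureStage s op i

variable {s op}

theorem subset_countableOpClosureStage (i : Ordinal.{u}) : s ⊆ countableOpClosureStage s op i := by
  rw [countableOpClosureStage]
  exact subset_union_left

theorem op_subset_countableOpClosureStage {i : Ordinal.{u}} {v : ℕ → Y}
    (hv : ∀ n, v n ∈ ⋃ j < i, countableOpClosureStage s op j) :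
    op v ⊆ countableOpClosureStage s op i := by
  intro x hx
  rw [countableOpClosureStage]
  exact Or.inr (mem_iUnion.2 ⟨fun n => ⟨v n, hv n⟩, hx⟩)

theorem subset_countableOpClosure : s ⊆ countableOpClosure s op :=
  fun _ hx => mem_iUnion₂.2 ⟨0, omega_pos 1, subset_countableOpClosureStage 0 hx⟩

theorem op_subset_countableOpClosure {v : ℕ → Y} (hv : ∀ n, v n ∈ countableOpClosure s op) :
    op v ⊆ countableOpClosure s op := by
  choose I hI hvI using fun n => mem_iUnion₂.1 (hv n)
  have hsup : ⨆ n, I n + 1 < ω₁ := lift_iSup_add_one_lt_of_lt_cof (by simp) hI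
  exact (op_subset_countableOpClosureStage fun n => mem_biUnion (lt_iSup_add_one I n) (hvI n)).trans
    (subset_biUnion_of_mem (u := countableOpClosureStage s op) hsup)

theorem mk_countableOpClosureStage_le (hs : #s ≤ 𝔠) (hop : ∀ v, #(op v) ≤ 𝔠) {i : Ordinal.{u}}
    (hi : i < ω₁) : #(countableOpClosureStage s op i) ≤ 𝔠 := by
  induction i using WellFoundedLT.induction with
  | ind i IH =>
  have hS : #(⋃ j < i, countableOpClosureStage s op j) ≤ 𝔠 :=
    mk_biUnion_le_of_le ((lt_omega_iff_card_lt.1 hi).le.trans aleph_one_le_continuum)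
      aleph0_le_continuum _ fun j hj => IH j hj (hj.trans hi)
  rw [countableOpClosureStage]
  calc _ ≤ 𝔠 + #(ℕ → ⋃ j < i, countableOpClosureStage s op j) * 𝔠 :=
        (mk_union_le _ _).trans (add_le_add hs ((mk_iUnion_le _).trans
          (mul_le_mul_right (ciSup_le' fun v => hop _) _)))
    _ ≤ 𝔠 + 𝔠 * 𝔠 := by gcongr; exact mk_nat_arrow_le_continuum hS
    _ = 𝔠 := by rw [continuum_mul_self, continuum_add_self]

theorem mk_countableOpClosure_le (hs : #s ≤ 𝔠) (hop : ∀ v, #(op v) ≤ 𝔠) :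
    #(countableOpClosure s op) ≤ 𝔠 :=
  mk_biUnion_le_of_le (by rw [card_omega]; exact aleph_one_le_continuum) aleph0_le_continuum _
    fun _ hi => mk_countableOpClosureStage_le hs hop hi

end CountableOpClosure

theorem IsClosed.eq_univ_of_forall_exists_notMem_iUnion {Y : Type u} [TopologicalSpace Y]
    [T1Space Y] [LindelofSpace Y] {b : Y → ℕ → Set Y}
    (hb : ∀ x, (𝓝 x).HasBasis (fun _ => True) (b x)) {A : Set Y} (hA : IsClosed A)
    (hne : A.Nonempty)
    (hsat : ∀ (u : ℕ → Y) (k : ℕ → ℕ), (∀ n, u n ∈ A) → (⋃ n, b (u n) (k n)) ≠ Set.univ →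
      ∃ x ∈ A, x ∉ ⋃ n, b (u n) (k n)) :
    A = Set.univ := by
  by_contra hAne
  obtain ⟨q, hq⟩ := (ne_univ_iff_exists_notMem A).1 hAne
  choose k hk using fun x (hx : x ∈ A) =>
    (hb x).mem_iff.1 (isOpen_compl_singleton.mem_nhds (ne_of_mem_of_not_mem hx hq))
  obtain ⟨t, htc, hAt⟩ :=
    hA.isLindelof.elim_nhds_subcover' (fun x hx => b x (k x hx))
      fun x _ => (hb x).mem_of_mem trivial
  obtain ⟨u, rfl⟩ := htc.exists_eq_range (by
    obtain ⟨x, hx⟩ := hne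
    obtain ⟨y, hy, -⟩ := mem_iUnion₂.1 (hAt hx)
    exact ⟨y, hy⟩)
  have hcover : A ⊆ ⋃ n, b (u n) (k (u n) (u n).2) := by
    simpa only [biUnion_range] using hAt
  have hq' : q ∉ ⋃ n, b (u n) (k (u n) (u n).2) :=
    fun h => by obtain ⟨n, hn⟩ := mem_iUnion.1 h; exact (hk (u n) (u n).2).2 hn rfl
  obtain ⟨x, hxA, hx⟩ := hsat (fun n => u n) (fun n => k (u n) (u n).2) (fun n => (u n).2)
    (ne_univ_iff_exists_notMem _ |>.2 ⟨q, hq'⟩)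
  exact hx (hcover hxA)

theorem Set.PairwiseDisjoint.mk_le_of_forall_inter_nonempty {X : Type u} {𝒰 : Set (Set X)}
    (h𝒰 : 𝒰.PairwiseDisjoint id) {L : Set X} (hL : ∀ U ∈ 𝒰, (U ∩ L).Nonempty) : #𝒰 ≤ #L := by
  choose f hfU hfL using fun U : 𝒰 => hL U U.2
  refine mk_le_of_injective (f := fun U => ⟨f U, hfL U⟩) fun U V hUV => Subtype.ext ?_
  have hfUV : f U = f V := congrArg Subtype.val hUV
  exact h𝒰.elim_set U.2 V.2 (f U) (hfU U) (hfUV ▸ hfU V)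

/-- in a Hausdorff cellular-Lindelöf first-countable space every
cellular family has cardinality at most the continuum. -/
theorem stmt9 {X : Type u} [TopologicalSpace X] [T2Space X]
    [FirstCountableTopology X] (hCL : CellularLindelof X) :
    ∀ 𝒰 : Set (Set X), IsCellularFamily 𝒰 → #𝒰 ≤ Cardinal.continuum := by
  intro 𝒰 h𝒰
  obtain ⟨L, hL, hmeet⟩ := hCL 𝒰 h𝒰
  have := isLindelof_iff_lindelofSpace.1 hL
  exact (h𝒰.2.mk_le_of_forall_inter_nonempty hmeet).trans (LindelofSpace.mk_le_continuum L)
end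

section
/- For any infinite cardinal κ, the Σ-product Σ(2^κ) = {x ∈ 2^κ : x(α) = 1 for at most countably many α}, with the subspace topology from the product topology on 2^κ, is a countably compact ccc Tychonoff space; for κ > ℵ₁ it is cellular-Lindelöf but not linearly Lindelöf. -/
open Cardinal Set Topology

universe u

/-- The Σ-product of `#ι` copies of the discrete two-point space: points of
`2^ι` with at most countably many coordinates equal to `true`. -/
def SigmaProd (ι : Type u) : Type u := {x : ι → Bool // {i : ι | x i = true}.Countable}

instance (ι : Type u) : TopologicalSpace (SigmaProd ι) :=
  instTopologicalSpaceSubtype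

/-- `X` is countably compact: every countable open cover has a finite subcover. -/
def CountablyCompactSpace' (X : Type u) [TopologicalSpace X] : Prop :=
  ∀ U : ℕ → Set X, (∀ n, IsOpen (U n)) → (⋃ n, U n) = Set.univ →
    ∃ F : Finset ℕ, (⋃ n ∈ F, U n) = Set.univ

/-- `X` is linearly Lindelöf: every open cover which is a chain under inclusion
has a countable subcover. -/
def LinearlyLindelofSpace (X : Type u) [TopologicalSpace X] : Prop :=
  ∀ 𝒰 : Set (Set X), (∀ U ∈ 𝒰, IsOpen U) → IsChain (· ⊆ ·) 𝒰 →
    ⋃₀ 𝒰 = Set.univ → ∃ 𝒱 ⊆ 𝒰, 𝒱.Countable ∧ ⋃₀ 𝒱 = Set.univ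

/-!
A nonempty open subset of `Σ(2^κ)` contains a cylinder fixed by a finite partial function
`κ ⇀ 2`, and disjoint open sets yield incompatible partial functions. An induction on the size
of the domains shows that every family of pairwise incompatible finite partial functions is
countable, so `Σ(2^κ)` is ccc, hence cellular-Lindelöf.

The closure in `2^κ` of a countable subset of `Σ(2^κ)` only contains points supported in the union
of countably many countable supports, so it is a compact subset of `Σ(2^κ)`: this gives countable
compactness. Being Tychonoff is inherited from `2^κ`.

For `ℵ₁ ≤ κ`, fix an embedding `g : ω₁ ↪ κ`. The indicators of the sets `g '' [0, α)` form a closed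
copy of `ω₁` in `Σ(2^κ)`, and the open sets `{y | y (g α) = 0} ∪ (copy)ᶜ` form an increasing
cover indexed by `ω₁` with no countable subcover.
-/

open Ordinal

theorem countablyCompactSpace'_of_forall_countable_subset_isCompact {X : Type u}
    [TopologicalSpace X] (h : ∀ s : Set X, s.Countable → ∃ K, IsCompact K ∧ s ⊆ K) :
    CountablyCompactSpace' X := by
  intro U hU hcov
  by_contra! hF
  have hx : ∀ n, ∃ x, x ∉ accumulate U n := fun n => by
    obtain ⟨x, hx⟩ := (Set.ne_univ_iff_exists_notMem _).mp (hF (Finset.range (n + 1)))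
    refine ⟨x, fun hxn => hx ?_⟩
    obtain ⟨k, hk, hxk⟩ := mem_accumulate.mp hxn
    exact mem_biUnion (Finset.mem_range.mpr (Nat.lt_succ_of_le hk)) hxk
  choose x hx using hx
  obtain ⟨K, hK, hxK⟩ := h (range x) (countable_range x)
  obtain ⟨n, hn⟩ := hK.elim_directed_cover (accumulate U) (fun n => isOpen_biUnion fun k _ => hU k)
    (by rw [iUnion_accumulate, hcov]; exact subset_univ K) monotone_accumulate.directed_le
  exact hx n (hn (hxK (mem_range_self n)))

theorem Pi.exists_apply_eq_of_mem_closure {ι Y : Type*} [TopologicalSpace Y] [DiscreteTopology Y]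
    {S : Set (ι → Y)} {z : ι → Y} (hz : z ∈ closure S) (i : ι) : ∃ x ∈ S, x i = z i := by
  obtain ⟨x, hx, hxS⟩ := mem_closure_iff.mp hz ((· i) ⁻¹' {z i})
    ((isOpen_discrete _).preimage (continuous_apply i)) rfl
  exact ⟨x, hxS, hx⟩

theorem cellularLindelof_of_countable {X : Type u} [TopologicalSpace X]
    (h : ∀ 𝒰 : Set (Set X), IsCellularFamily 𝒰 → 𝒰.Countable) : CellularLindelof X := by
  intro 𝒰 h𝒰
  have := (h 𝒰 h𝒰).to_subtype
  choose x hx using fun U : 𝒰 => (h𝒰.1 U U.2).2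
  exact ⟨range x, (countable_range x).isLindelof,
    fun U hU => ⟨x ⟨U, hU⟩, hx ⟨U, hU⟩, mem_range_self _⟩⟩

theorem not_linearlyLindelofSpace_of_monotone {X : Type u} [TopologicalSpace X] {W : Type*}
    [LinearOrder W] (hW : ∀ s : Set W, s.Countable → BddAbove s) {V : W → Set X}
    (hV : Monotone V) (hVo : ∀ α, IsOpen (V α)) (hcov : ⋃ α, V α = Set.univ)
    (hne : ∀ α, V α ≠ Set.univ) : ¬ LinearlyLindelofSpace X := by
  intro hLL
  obtain ⟨𝒱, h𝒱V, h𝒱, h𝒱cov⟩ :=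
    hLL (range V) (forall_mem_range.2 hVo) hV.isChain_range (by rw [sUnion_range, hcov])
  choose a ha using fun U : 𝒱 => h𝒱V U.2
  have := h𝒱.to_subtype
  obtain ⟨γ, hγ⟩ := hW (range a) (countable_range a)
  refine hne γ (eq_univ_of_univ_subset (h𝒱cov ▸ sUnion_subset fun U hU => ?_))
  exact (ha ⟨U, hU⟩).symm.trans_subset (hV (hγ (mem_range_self _)))

/-- Finite partial functions `ι → Bool` are encoded as pairs `(domain, values)`. -/
def Incompatible {ι : Type*} (p q : Finset ι × (ι → Bool)) : Prop :=
  ∃ i ∈ p.1, i ∈ q.1 ∧ p.2 i ≠ q.2 i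

namespace Incompatible

variable {ι : Type*} {p q : Finset ι × (ι → Bool)}

theorem ne (h : Incompatible p q) : p ≠ q := by
  rintro rfl
  obtain ⟨i, -, -, hi⟩ := h
  exact hi rfl

theorem erase [DecidableEq ι] (h : Incompatible p q) {i : ι} (hi : p.2 i = q.2 i) :
    Incompatible (p.1.erase i, p.2) (q.1.erase i, q.2) := by
  obtain ⟨j, hjp, hjq, hj⟩ := h
  have hji : j ≠ i := by
    rintro rfl
    exact hj hi
  exact ⟨j, Finset.mem_erase.mpr ⟨hji, hjp⟩, Finset.mem_erase.mpr ⟨hji, hjq⟩, hj⟩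

end Incompatible

theorem countable_of_pairwise_incompatible_of_card_le {ι : Type*} (n : ℕ)
    {F : Set (Finset ι × (ι → Bool))} (hcard : ∀ p ∈ F, p.1.card ≤ n)
    (hF : F.Pairwise Incompatible) : F.Countable := by
  classical
  induction n generalizing F with
  | zero =>
    refine Set.Subsingleton.countable fun p hp q hq => by_contra fun hne => ?_
    obtain ⟨i, hi, -⟩ := hF hp hq hne
    simp [Finset.card_eq_zero.mp (Nat.le_zero.mp (hcard p hp))] at hi
  | succ n ih =>
    rcases F.eq_empty_or_nonempty with rfl | ⟨p₀, hp₀⟩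
    · exact countable_empty
    set G : ι → Set (Finset ι × (ι → Bool)) := fun i => {q ∈ F | i ∈ q.1 ∧ q.2 i ≠ p₀.2 i}
    have hFG : F ⊆ insert p₀ (⋃ i ∈ p₀.1, G i) := fun q hq => by
      rcases eq_or_ne q p₀ with rfl | hne
      · exact mem_insert _ _
      obtain ⟨i, hiq, hip, hi⟩ := hF hq hp₀ hne
      exact mem_insert_of_mem _ (mem_biUnion hip ⟨hq, hiq, hi⟩)
    refine ((p₀.1.countable_toSet.biUnion fun i _ => ?_).insert p₀).mono hFG
    -- the members of `G i` all take the value `!p₀.2 i` at `i`, so `i` can be erased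
    have hinj : InjOn (fun q => (q.1.erase i, q.2)) (G i) := fun q hq r hr h => by
      simp only [Prod.mk.injEq] at h
      exact Prod.ext (by rw [← Finset.insert_erase hq.2.1, ← Finset.insert_erase hr.2.1, h.1]) h.2
    refine countable_of_injective_of_countable_image hinj (ih ?_ ?_)
    · rintro _ ⟨q, hq, rfl⟩
      have := hcard q hq.1
      rw [Finset.card_erase_of_mem hq.2.1]
      omega
    · rw [hinj.pairwise_image]
      intro q hq r hr hne
      exact (hF hq.1 hr.1 hne).erase
        ((Bool.eq_not_iff.mpr hq.2.2).trans (Bool.eq_not_iff.mpr hr.2.2).symm)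

theorem countable_of_pairwise_incompatible {ι : Type*} {F : Set (Finset ι × (ι → Bool))}
    (hF : F.Pairwise Incompatible) : F.Countable := by
  have hF' : F ⊆ ⋃ n : ℕ, {p ∈ F | p.1.card ≤ n} := fun p hp => mem_iUnion_of_mem _ ⟨hp, le_rfl⟩
  exact (countable_iUnion fun n => countable_of_pairwise_incompatible_of_card_le n
    (fun _ hp => hp.2) (hF.mono fun _ hp => hp.1)).mono hF'

theorem mk_toType_omega_one : #(ω₁ : Ordinal.{u}).ToType = ℵ₁ := by
  rw [mk_toType, card_omega]

theorem countable_Iio_toType_omega_one (α : (ω₁ : Ordinal.{u}).ToType) : (Iio α).Countable := by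
  rw [← le_aleph0_iff_set_countable, ← lt_aleph_one_iff, ← mk_toType_omega_one]
  exact mk_Iio_lt α (by simp)

theorem exists_gt_of_countable_toType_omega_one {s : Set (ω₁ : Ordinal.{u}).ToType}
    (hs : s.Countable) : ∃ γ, ∀ a ∈ s, a < γ := by
  have hs' : ¬ IsCofinal s := fun hcof =>
    (lt_aleph_one_iff.mpr (le_aleph0_iff_set_countable.mpr hs)).not_ge
      (by simpa using Order.cof_le hcof)
  simpa [IsCofinal] using hs'

namespace SigmaProd

variable {ι : Type u}

theorem isEmbedding_val : IsEmbedding (Subtype.val : SigmaProd ι → ι → Bool) :=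
  IsEmbedding.subtypeVal

instance : T35Space (SigmaProd ι) := inferInstanceAs (T35Space {_x : ι → Bool // _})

theorem exists_isCompact_superset {s : Set (SigmaProd ι)} (hs : s.Countable) :
    ∃ K, IsCompact K ∧ s ⊆ K := by
  set T := closure (Subtype.val '' s)
  have hT : T ⊆ range (Subtype.val : SigmaProd ι → ι → Bool) := fun z hz => by
    refine ⟨⟨z, (hs.biUnion fun x _ => x.2).mono fun i hi => ?_⟩, rfl⟩
    obtain ⟨_, ⟨x, hx, rfl⟩, hxi⟩ := Pi.exists_apply_eq_of_mem_closure hz i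
    exact mem_biUnion hx (hxi.trans hi)
  exact ⟨_, isEmbedding_val.isInducing.isCompact_preimage' isClosed_closure.isCompact hT,
    fun x hx => subset_closure (mem_image_of_mem _ hx)⟩

theorem countablyCompactSpace' : CountablyCompactSpace' (SigmaProd ι) :=
  countablyCompactSpace'_of_forall_countable_subset_isCompact fun _ => exists_isCompact_superset

def cylinder (p : Finset ι × (ι → Bool)) : Set (SigmaProd ι) :=
  {y | ∀ i ∈ p.1, y.val i = p.2 i}

theorem exists_cylinder_subset {U : Set (SigmaProd ι)} (hU : IsOpen U) (hne : U.Nonempty) :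
    ∃ p, cylinder p ⊆ U := by
  obtain ⟨x, hx⟩ := hne
  obtain ⟨V, hV, rfl⟩ := isOpen_induced_iff.mp hU
  obtain ⟨I, u, hu, hIV⟩ := isOpen_pi_iff.mp hV x.val hx
  exact ⟨(I, x.val), fun y hy => hIV fun i hi => (hy i hi).symm ▸ (hu i hi).2⟩

theorem cylinder_inter_nonempty {p q : Finset ι × (ι → Bool)} (h : ¬ Incompatible p q) :
    (cylinder p ∩ cylinder q).Nonempty := by
  classical
  simp only [Incompatible, not_exists, not_and, not_not] at h
  let z : ι → Bool := fun i => if i ∈ p.1 then p.2 i else if i ∈ q.1 then q.2 i else false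
  have hz : {i | z i = true} ⊆ ((p.1 ∪ q.1 : Finset ι) : Set ι) := fun i hi => by
    by_contra hpq
    simp_all [z]
  refine ⟨⟨z, (Finset.countable_toSet _).mono hz⟩, fun i hi => if_pos hi, fun i hi => ?_⟩
  by_cases hip : i ∈ p.1
  · exact (if_pos hip).trans (h i hip hi)
  · exact (if_neg hip).trans (if_pos hi)

theorem countable_of_isCellularFamily {𝒰 : Set (Set (SigmaProd ι))} (h : IsCellularFamily 𝒰) :
    𝒰.Countable := by
  choose! p hp using fun U hU => exists_cylinder_subset (h.1 U hU).1 (h.1 U hU).2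
  have hinc : 𝒰.Pairwise fun U V => Incompatible (p U) (p V) := fun U hU V hV hne => by
    by_contra hpq
    obtain ⟨y, hyU, hyV⟩ := cylinder_inter_nonempty hpq
    exact disjoint_left.mp (h.2 hU hV hne) (hp U hU hyU) (hp V hV hyV)
  have hinj : InjOn p 𝒰 := fun U hU V hV hpUV =>
    by_contra fun hne => (hinc hU hV hne).ne hpUV
  exact countable_of_injective_of_countable_image hinj
    (countable_of_pairwise_incompatible (hinj.pairwise_image.mpr hinc))

theorem isClopen_setOf_val_apply_eq (i : ι) (b : Bool) :
    IsClopen {y : SigmaProd ι | y.val i = b} :=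
  (isClopen_discrete {b}).preimage ((continuous_apply i).comp continuous_subtype_val)

variable (g : (ω₁ : Ordinal.{u}).ToType ↪ ι)

open Classical in
noncomputable def omegaOnePoint (α : (ω₁ : Ordinal.{u}).ToType) : SigmaProd ι :=
  ⟨fun i => decide (i ∈ g '' Iio α),
    ((countable_Iio_toType_omega_one α).image g).mono fun i hi => by simpa using hi⟩

variable {g}

theorem omegaOnePoint_apply_eq_true {α : (ω₁ : Ordinal.{u}).ToType} {i : ι} :
    (omegaOnePoint g α).val i = true ↔ i ∈ g '' Iio α := by
  simp [omegaOnePoint]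

theorem omegaOnePoint_apply_embedding_eq_true {α β : (ω₁ : Ordinal.{u}).ToType} :
    (omegaOnePoint g α).val (g β) = true ↔ β < α := by
  simp [omegaOnePoint_apply_eq_true]

theorem range_omegaOnePoint : range (omegaOnePoint g) =
    {y | (∀ i, y.val i = true → i ∈ range g) ∧ IsLowerSet {β | y.val (g β) = true}} := by
  refine Subset.antisymm ?_ fun y ⟨hsupp, hlower⟩ => ?_
  · rintro _ ⟨α, rfl⟩
    refine ⟨fun i hi => ?_, fun β β' hle hβ => ?_⟩
    · obtain ⟨β, -, rfl⟩ := omegaOnePoint_apply_eq_true.mp hi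
      exact mem_range_self β
    · exact omegaOnePoint_apply_embedding_eq_true.mpr
        (hle.trans_lt (omegaOnePoint_apply_embedding_eq_true.mp hβ))
  obtain ⟨γ, hγ⟩ := exists_gt_of_countable_toType_omega_one (y.2.preimage g.injective)
  rcases hlower.eq_univ_or_Iio with huniv | ⟨α, hα⟩
  · exact (lt_irrefl γ (hγ γ (show γ ∈ {β | y.val (g β) = true} from huniv ▸ mem_univ γ))).elim
  refine ⟨α, Subtype.ext (funext fun i => ?_)⟩
  by_cases hi : i ∈ range g
  · obtain ⟨β, rfl⟩ := hi
    rw [Bool.eq_iff_iff, omegaOnePoint_apply_embedding_eq_true, ← mem_Iio, ← hα, mem_ofPred_eq]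
  · rw [Bool.eq_false_iff.mpr fun h => hi (hsupp i h), Bool.eq_false_iff.mpr fun h =>
      hi (image_subset_range _ _ (omegaOnePoint_apply_eq_true.mp h))]

theorem isClosed_range_omegaOnePoint : IsClosed (range (omegaOnePoint g)) := by
  have hsupp : IsClosed {y : SigmaProd ι | ∀ i, y.val i = true → i ∈ range g} := by
    simp only [ofPred_forall]
    exact isClosed_iInter fun i =>
      isClosed_imp (isClopen_setOf_val_apply_eq i true).isOpen isClosed_const
  have hlower : IsClosed {y : SigmaProd ι | IsLowerSet {β | y.val (g β) = true}} := by
    simp only [IsLowerSet, mem_ofPred_eq, ofPred_forall]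
    exact isClosed_iInter fun β => isClosed_iInter fun β' => isClosed_iInter fun _ =>
      isClosed_imp (isClopen_setOf_val_apply_eq (g β) true).isOpen
        (isClopen_setOf_val_apply_eq (g β') true).isClosed
  rw [range_omegaOnePoint, ofPred_and]
  exact hsupp.inter hlower

variable (g) in
def omegaOneCover (α : (ω₁ : Ordinal.{u}).ToType) : Set (SigmaProd ι) :=
  {y | y.val (g α) = false} ∪ (range (omegaOnePoint g))ᶜ

theorem omegaOnePoint_mem_omegaOneCover {α β : (ω₁ : Ordinal.{u}).ToType} :
    omegaOnePoint g β ∈ omegaOneCover g α ↔ β ≤ α := by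
  simp [omegaOneCover, ← not_lt, ← omegaOnePoint_apply_embedding_eq_true (g := g)]

theorem monotone_omegaOneCover : Monotone (omegaOneCover g) := fun α α' hα y hy => by
  by_cases hyC : y ∈ range (omegaOnePoint g)
  · obtain ⟨β, rfl⟩ := hyC
    exact omegaOnePoint_mem_omegaOneCover.mpr ((omegaOnePoint_mem_omegaOneCover.mp hy).trans hα)
  · exact Or.inr hyC

theorem isOpen_omegaOneCover (α : (ω₁ : Ordinal.{u}).ToType) : IsOpen (omegaOneCover g α) :=
  (isClopen_setOf_val_apply_eq _ _).isOpen.union isClosed_range_omegaOnePoint.isOpen_compl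

theorem iUnion_omegaOneCover : ⋃ α, omegaOneCover g α = Set.univ := by
  obtain ⟨α₀, -⟩ := exists_gt_of_countable_toType_omega_one (s := ∅) countable_empty
  refine eq_univ_of_forall fun y => ?_
  by_cases hyC : y ∈ range (omegaOnePoint g)
  · obtain ⟨β, rfl⟩ := hyC
    exact mem_iUnion_of_mem β (omegaOnePoint_mem_omegaOneCover.mpr le_rfl)
  · exact mem_iUnion_of_mem α₀ (Or.inr hyC)

theorem omegaOneCover_ne_univ (α : (ω₁ : Ordinal.{u}).ToType) :
    omegaOneCover g α ≠ Set.univ := fun hα => by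
  obtain ⟨γ, hγ⟩ := exists_gt_of_countable_toType_omega_one (countable_singleton α)
  exact (omegaOnePoint_mem_omegaOneCover.mp (hα ▸ mem_univ (omegaOnePoint g γ))).not_gt
    (hγ α rfl)

theorem not_linearlyLindelofSpace (h : ℵ₁ ≤ #ι) : ¬ LinearlyLindelofSpace (SigmaProd ι) := by
  obtain ⟨g⟩ := (Cardinal.le_def _ ι).mp (mk_toType_omega_one.trans_le h)
  refine not_linearlyLindelofSpace_of_monotone (fun s hs => ?_) (monotone_omegaOneCover (g := g))
    isOpen_omegaOneCover iUnion_omegaOneCover omegaOneCover_ne_univ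
  obtain ⟨γ, hγ⟩ := exists_gt_of_countable_toType_omega_one hs
  exact ⟨γ, fun a ha => (hγ a ha).le⟩

end SigmaProd

theorem stmt11_general (ι : Type u) :
    CountablyCompactSpace' (SigmaProd ι) ∧
    (∀ 𝒰 : Set (Set (SigmaProd ι)), IsCellularFamily 𝒰 → 𝒰.Countable) ∧
    T35Space (SigmaProd ι) ∧
    (Cardinal.aleph 1 < #ι →
      CellularLindelof (SigmaProd ι) ∧ ¬ LinearlyLindelofSpace (SigmaProd ι)) :=
  ⟨SigmaProd.countablyCompactSpace', fun _ h => SigmaProd.countable_of_isCellularFamily h,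
    inferInstance, fun hκ =>
    ⟨cellularLindelof_of_countable fun _ h => SigmaProd.countable_of_isCellularFamily h,
      SigmaProd.not_linearlyLindelofSpace hκ.le⟩⟩

/-- for any infinite `κ = #ι`, the Σ-product `Σ(2^κ)` is a countably
compact ccc Tychonoff space; for `κ > ℵ₁` it is cellular-Lindelöf but not linearly
Lindelöf. -/
theorem stmt11 (ι : Type u) [Infinite ι] :
    CountablyCompactSpace' (SigmaProd ι) ∧
    (∀ 𝒰 : Set (Set (SigmaProd ι)), IsCellularFamily 𝒰 → 𝒰.Countable) ∧
    T35Space (SigmaProd ι) ∧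
    (Cardinal.aleph 1 < #ι →
      CellularLindelof (SigmaProd ι) ∧ ¬ LinearlyLindelofSpace (SigmaProd ι)) :=
  stmt11_general ι
end

section
/- In the Katětov extension K(ω), every θ-free sequence has cardinality at most 𝔠; hence F_θ(K(ω)) ≤ 𝔠 while F(K(ω)) = 2^𝔠, so F_θ(X) < F(X) can hold for a Urysohn space X. -/
open Cardinal Set Topology

universe u

/-- The topology of the Katětov extension `K(ω)` on the set of ultrafilters on `ω`. -/
def katetovTop : TopologicalSpace (Ultrafilter ℕ) :=
  TopologicalSpace.generateFrom
    {S | (∃ n : ℕ, S = {(pure n : Ultrafilter ℕ)}) ∨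
      ∃ (p : Ultrafilter ℕ) (A : Set ℕ), A ∈ p ∧
        S = insert p ((fun n : ℕ => (pure n : Ultrafilter ℕ)) '' A)}

/-!
In `K(ω)` every ultrafilter `x` is the limit of `n ↦ pure n` along `x` itself. So if `U` is an
open neighbourhood of `x`, then `A = pure ⁻¹' U` belongs to `x` and every ultrafilter containing
`A` lies in `closure U`. A point outside the θ-closure of `E` is therefore separated from `E` by
some `A ∈ x` belonging to no member of `E`; along a θ-free sequence these sets are pairwise
distinct, so there are at most `𝔠` terms.

Every set of free ultrafilters is closed in `K(ω)`, so any injective sequence of free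
ultrafilters is free; by Pospíšil's theorem (an independent family of `𝔠` subsets of a countable
set) there are `2 ^ 𝔠` of them. The sets `{r | A ∈ r}` are clopen in `K(ω)`, so `K(ω)` is Urysohn.
-/

open Filter

theorem thetaCl_subset_thetaClosure {X : Type u} [TopologicalSpace X] (A : Set X) :
    thetaCl A ⊆ thetaClosure A := by
  rintro x hx B ⟨hAB, hB⟩
  rw [← hB]
  intro U hU hxU
  obtain ⟨y, hyU, hyA⟩ := hx U hU hxU
  exact ⟨y, hyU, hAB hyA⟩

section IndependentFamily

variable {ι α β : Type*}

/-- Every finite Boolean combination of members is nonempty: `{x | x ∈ A i ↔ g i}` is `A i` or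
its complement according to `g i`. -/
def IsIndependentFamily (A : ι → Set α) : Prop :=
  ∀ (s : Finset ι) (g : ι → Prop), (⋂ i ∈ s, {x | x ∈ A i ↔ g i}).Nonempty

theorem IsIndependentFamily.preimage {A : ι → Set α} (hA : IsIndependentFamily A) {f : β → α}
    (hf : Function.Surjective f) : IsIndependentFamily fun i => f ⁻¹' A i := by
  intro s g
  obtain ⟨x, hx⟩ := hA s g
  obtain ⟨y, rfl⟩ := hf x
  exact ⟨y, by simpa using hx⟩

theorem IsIndependentFamily.surjective_mem {A : ι → Set α} (hA : IsIndependentFamily A) :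
    Function.Surjective fun (u : Ultrafilter α) (i : ι) => A i ∈ u := by
  classical
  intro g
  obtain ⟨u, hu⟩ := Ultrafilter.exists_ultrafilter_of_finite_inter_nonempty
    (Set.range fun i => {x | x ∈ A i ↔ g i}) fun T hT => by
      rw [← Set.image_univ, Finset.subset_set_image_iff] at hT
      obtain ⟨s, -, rfl⟩ := hT
      simpa [Set.sInter_image] using hA s g
  refine ⟨u, funext fun i => propext ?_⟩
  have hi : {x | x ∈ A i ↔ g i} ∈ u := hu ⟨i, rfl⟩
  by_cases h : g i
  · simpa [h] using hi
  · simp only [h, iff_false] at hi ⊢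
    exact Ultrafilter.compl_mem_iff_notMem.1 hi

theorem IsIndependentFamily.two_power_mk_le {ι α : Type u} {A : ι → Set α}
    (hA : IsIndependentFamily A) : 2 ^ #ι ≤ #(Ultrafilter α) := by
  rw [← mk_set]
  exact mk_le_of_surjective hA.surjective_mem

theorem exists_finset_injOn_inter (T : Finset (Set α)) :
    ∃ F : Finset α, Set.InjOn (fun X => (F : Set α) ∩ X) T := by
  have hpair (X Y : Set α) : ∃ F : Finset α, X ≠ Y → (F : Set α) ∩ X ≠ ↑F ∩ Y := by
    by_cases hXY : X = Y
    · exact ⟨∅, fun h => (h hXY).elim⟩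
    obtain ⟨n, hn⟩ := not_forall.1 (mt Set.ext hXY)
    refine ⟨{n}, fun _ h => hn ?_⟩
    simpa using congrArg (n ∈ ·) h
  choose sep hsep using hpair
  classical
  refine ⟨T.biUnion fun X => T.biUnion (sep X), fun X hX Y hY hXY => by_contra fun hne => ?_⟩
  have hsub : (sep X Y : Set α) ⊆ ↑(T.biUnion fun X => T.biUnion (sep X)) := by
    intro n hn
    simp only [Finset.coe_biUnion, Set.mem_iUnion]
    exact ⟨X, hX, Y, hY, hn⟩
  apply hsep X Y hne
  rw [← Set.inter_eq_left.2 hsub, Set.inter_assoc, Set.inter_assoc]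
  exact congrArg _ hXY

def traceFamily (X : Set α) : Set (Finset α × Finset (Finset α)) :=
  {z | ∃ G ∈ z.2, (G : Set α) = ↑z.1 ∩ X}

theorem isIndependentFamily_traceFamily : IsIndependentFamily (traceFamily (α := α)) := by
  classical
  intro s g
  obtain ⟨F, hF⟩ := exists_finset_injOn_inter s
  have hcoe (Y : Set α) : ((F.filter (· ∈ Y) : Finset α) : Set α) = ↑F ∩ Y := by ext; simp
  refine ⟨(F, (s.filter g).image fun Y => F.filter (· ∈ Y)), ?_⟩
  simp only [Set.mem_iInter, Set.mem_ofPred_eq, traceFamily, Finset.mem_image, Finset.mem_filter]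
  intro X hX
  constructor
  · rintro ⟨_, ⟨Y, ⟨hY, hgY⟩, rfl⟩, hYX⟩
    rwa [← hF hY hX ((hcoe Y).symm.trans hYX)]
  · intro hgX
    exact ⟨_, ⟨X, ⟨hX, hgX⟩, rfl⟩, hcoe X⟩

end IndependentFamily

theorem mk_ultrafilter_nat : #(Ultrafilter ℕ) = 2 ^ 𝔠 := by
  refine le_antisymm ?_ ?_
  · calc #(Ultrafilter ℕ) ≤ #(Set (Set ℕ)) :=
          mk_le_of_injective fun u v h => Ultrafilter.coe_injective (Filter.filter_eq h)
      _ = 2 ^ 𝔠 := by rw [mk_set, mk_set_nat]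
  · let e : ℕ ≃ Finset ℕ × Finset (Finset ℕ) := (Denumerable.eqv _).symm
    simpa [mk_set_nat] using
      (isIndependentFamily_traceFamily.preimage e.surjective).two_power_mk_le

theorem mk_compl_range_pure_nat : #((range (pure : ℕ → Ultrafilter ℕ))ᶜ : Set _) = 2 ^ 𝔠 := by
  have hlt : ℵ₀ < 2 ^ 𝔠 := aleph0_lt_continuum.trans (cantor _)
  have : Infinite (Ultrafilter ℕ) := infinite_iff.2 (mk_ultrafilter_nat ▸ hlt.le)
  rw [mk_compl_of_infinite, mk_ultrafilter_nat]
  calc #(range (pure : ℕ → Ultrafilter ℕ)) ≤ #ℕ := mk_range_le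
    _ < #(Ultrafilter ℕ) := by rwa [mk_nat, mk_ultrafilter_nat]

namespace Katetov

-- `Ultrafilter ℕ` already carries the topology of `βω` as an instance.
attribute [local instance 2000] katetovTop

theorem tendsto_pure_nhds (x : Ultrafilter ℕ) :
    Tendsto (pure : ℕ → Ultrafilter ℕ) (x : Filter ℕ) (𝓝 x) := by
  rw [katetovTop, TopologicalSpace.nhds_generateFrom]
  simp only [tendsto_iInf, tendsto_principal]
  rintro s ⟨hxs, ⟨n, rfl⟩ | ⟨p, A, hA, rfl⟩⟩
  · obtain rfl : x = pure n := hxs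
    simp
  · rcases hxs with rfl | ⟨m, hm, rfl⟩
    · exact Filter.mem_of_superset hA fun m hm => Or.inr ⟨m, hm, rfl⟩
    · simpa using Or.inr ⟨m, hm, rfl⟩

theorem mem_closure_of_preimage_pure_mem {U : Set (Ultrafilter ℕ)} {r : Ultrafilter ℕ}
    (h : pure ⁻¹' U ∈ r) : r ∈ closure U :=
  mem_closure_of_tendsto (tendsto_pure_nhds r) h

theorem exists_mem_forall_notMem_of_notMem_thetaCl {x : Ultrafilter ℕ}
    {E : Set (Ultrafilter ℕ)} (hx : x ∉ thetaCl E) : ∃ A ∈ x, ∀ r ∈ E, A ∉ r := by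
  simp only [thetaCl, Set.mem_ofPred_eq, not_forall] at hx
  obtain ⟨U, hU, hxU, hUE⟩ := hx
  exact ⟨pure ⁻¹' U, tendsto_pure_nhds x (hU.mem_nhds hxU),
    fun r hrE hr => hUE ⟨r, mem_closure_of_preimage_pure_mem hr, hrE⟩⟩

theorem mk_le_continuum_of_isThetaFreeSeq {ι : Type} [LinearOrder ι] {f : ι → Ultrafilter ℕ}
    (hf : IsThetaFreeSeq f) : #ι ≤ 𝔠 := by
  have hsep (i : ι) : ∃ A ∈ f i, ∀ j < i, A ∉ f j := by
    have hi : f i ∉ thetaCl (f '' {j | j < i}) := fun hi =>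
      (hf i).subset ⟨thetaCl_subset_thetaClosure _ hi, subset_closure ⟨i, le_rfl, rfl⟩⟩
    obtain ⟨A, hA, hAE⟩ := exists_mem_forall_notMem_of_notMem_thetaCl hi
    exact ⟨A, hA, fun j hj => hAE _ ⟨j, hj, rfl⟩⟩
  choose A hA hAlt using hsep
  have hAinj : Function.Injective A := Function.Injective.of_lt_imp_ne fun i j hij h =>
    hAlt j i hij (h ▸ hA i)
  exact mk_set_nat ▸ mk_le_of_injective hAinj

theorem isOpen_setOf_mem (A : Set ℕ) : IsOpen {r : Ultrafilter ℕ | A ∈ r} := by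
  refine isOpen_iff_forall_mem_open.2 fun r hr => ⟨_, ?_, .basic _ (Or.inr ⟨r, A, hr, rfl⟩),
    mem_insert r _⟩
  rintro _ (rfl | ⟨n, hn, rfl⟩)
  exacts [hr, hn]

theorem isClopen_setOf_mem (A : Set ℕ) : IsClopen {r : Ultrafilter ℕ | A ∈ r} := by
  refine ⟨?_, isOpen_setOf_mem A⟩
  simpa only [← isOpen_compl_iff, Set.compl_ofPred, ← Ultrafilter.compl_mem_iff_notMem]
    using isOpen_setOf_mem Aᶜ

theorem isClosed_of_subset_compl_range_pure {S : Set (Ultrafilter ℕ)}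
    (hS : S ⊆ (range pure)ᶜ) : IsClosed S := by
  refine isOpen_compl_iff.1 (isOpen_iff_forall_mem_open.2 fun x hx => ⟨_, ?_,
    .basic _ (Or.inr ⟨x, univ, univ_mem, rfl⟩), mem_insert x _⟩)
  rintro _ (rfl | ⟨n, -, rfl⟩)
  exacts [hx, fun hn => hS hn ⟨n, rfl⟩]

theorem isFreeSeq_of_injective {ι : Type} [LinearOrder ι] {f : ι → Ultrafilter ℕ}
    (hf : Function.Injective f) (hfree : range f ⊆ (range pure)ᶜ) : IsFreeSeq f := by
  have hcl (s : Set ι) : IsClosed (f '' s) :=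
    isClosed_of_subset_compl_range_pure ((image_subset_range f s).trans hfree)
  intro i
  rw [(hcl _).closure_eq, (hcl _).closure_eq, ← image_inter hf, eq_empty_iff_forall_notMem]
  rintro _ ⟨j, ⟨hji, hij⟩, -⟩
  exact (not_le.2 hji) hij

theorem exists_isFreeSeq_mk_eq_two_power_continuum :
    ∃ (ι : Type) (_ : LinearOrder ι) (_ : WellFoundedLT ι) (f : ι → Ultrafilter ℕ),
      IsFreeSeq f ∧ #ι = 2 ^ 𝔠 := by
  have hι : #(2 ^ 𝔠 : Cardinal.{0}).ord.ToType = 2 ^ 𝔠 := by rw [mk_toType, card_ord]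
  obtain ⟨e⟩ := Cardinal.eq.1 (hι.trans mk_compl_range_pure_nat.symm)
  exact ⟨_, inferInstance, inferInstance, fun i => e i,
    isFreeSeq_of_injective (Subtype.val_injective.comp e.injective)
      (range_subset_iff.2 fun i => (e i).2), hι⟩

theorem exists_isOpen_closure_inter_closure_eq_empty {p q : Ultrafilter ℕ} (hpq : p ≠ q) :
    ∃ U V : Set (Ultrafilter ℕ), IsOpen U ∧ IsOpen V ∧ p ∈ U ∧ q ∈ V ∧
      closure U ∩ closure V = ∅ := by
  obtain ⟨A, hAq, hAp⟩ := Filter.not_le.1 (mt Ultrafilter.coe_le_coe.1 hpq)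
  refine ⟨{r | Aᶜ ∈ r}, {r | A ∈ r}, (isClopen_setOf_mem _).isOpen,
    (isClopen_setOf_mem _).isOpen, Ultrafilter.compl_mem_iff_notMem.2 hAp, hAq, ?_⟩
  rw [(isClopen_setOf_mem _).isClosed.closure_eq, (isClopen_setOf_mem _).isClosed.closure_eq]
  exact eq_empty_iff_forall_notMem.2 fun r hr => Ultrafilter.compl_mem_iff_notMem.1 hr.1 hr.2

end Katetov

/-- every θ-free sequence in `K(ω)` has cardinality at most `𝔠`
(so `F_θ(K(ω)) ≤ 𝔠`), while `K(ω)` has a free sequence of length `2^𝔠` (so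
`F(K(ω)) = 2^𝔠`); moreover `K(ω)` is Urysohn, so `F_θ(X) < F(X)` can happen for a
Urysohn space `X`. -/
theorem stmt13 :
    (∀ (ι : Type) [LinearOrder ι] [WellFoundedLT ι] (f : ι → Ultrafilter ℕ),
      (@IsThetaFreeSeq _ katetovTop _ _ f) → #ι ≤ Cardinal.continuum) ∧
    (∃ (ι : Type) (_ : LinearOrder ι) (_ : WellFoundedLT ι) (f : ι → Ultrafilter ℕ),
      (@IsFreeSeq _ katetovTop _ _ f) ∧ #ι = 2 ^ Cardinal.continuum) ∧
    (∀ p q : Ultrafilter ℕ, p ≠ q → ∃ U V : Set (Ultrafilter ℕ),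
      @IsOpen _ katetovTop U ∧ @IsOpen _ katetovTop V ∧ p ∈ U ∧ q ∈ V ∧
      @closure _ katetovTop U ∩ @closure _ katetovTop V = ∅) :=
  ⟨fun _ _ _ _ hf => Katetov.mk_le_continuum_of_isThetaFreeSeq hf,
    Katetov.exists_isFreeSeq_mk_eq_two_power_continuum,
    fun _ _ => Katetov.exists_isOpen_closure_inter_closure_eq_empty⟩
end

section
/- Let X be a regular topological space in which every free sequence has length at most κ, and suppose some cardinal λ with κ < λ ≤ (2^κ)^+ is a caliber of X. Then X has a dense subset of cardinality at most 2^κ. -/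
open Cardinal Set Topology

universe u

/-!
Suppose no set of size `≤ 2^κ` is dense. Recursively along `λ`, regularity gives nonempty open
sets `V α` whose closures miss the closure of `D α = intersectionPoints κ V α`, a set of
`≤ 2^κ` points containing a point of every nonempty `⋂ β ∈ F, V β` with `F ⊆ Iio α`,
`#F ≤ κ`; the bound uses `#(Iio α) ≤ 2^κ`, i.e. `λ ≤ (2^κ)⁺`, and `(2^κ)^κ = 2^κ`. The caliber
yields `λ > κ` of these sets with a common point `p`. Along the first `κ⁺` of them, `s ξ`, the
points chosen in `⋂ η ≤ ξ, V (s η)` (nonempty thanks to `p`) form a free sequence: the part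
before `ξ` lies in `D (s ξ)`, the rest in `V (s ξ)`. This contradicts the bound `κ` on free
sequences.
-/

open Ordinal

theorem exists_forall_transfinite {ι β : Type*} [LinearOrder ι] [WellFoundedLT ι] [Nonempty β]
    (P : ι → (ι → β) → β → Prop)
    (hP : ∀ α f g, (∀ γ < α, f γ = g γ) → ∀ b, P α f b → P α g b)
    (hex : ∀ α f, ∃ b, P α f b) : ∃ f : ι → β, ∀ α, P α f (f α) := by
  classical
  choose G hG using hex
  let extend (α : ι) (g : ∀ γ < α, β) : ι → β :=
    fun γ => if h : γ < α then g γ h else Classical.arbitrary β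
  let f : ι → β := wellFounded_lt.fix fun α g => G α (extend α g)
  refine ⟨f, fun α => ?_⟩
  have hfix : f α = G α (extend α fun γ _ => f γ) := wellFounded_lt.fix_eq _ α
  rw [hfix]
  exact hP α _ f (fun γ hγ => dif_pos hγ) _ (hG α _)

theorem RegularSpace.exists_isOpen_disjoint_closure_of_not_dense {X : Type*}
    [TopologicalSpace X] [RegularSpace X] {A : Set X} (hA : ¬ Dense A) :
    ∃ V : Set X, IsOpen V ∧ V.Nonempty ∧ Disjoint (closure V) (closure A) := by
  obtain ⟨z, hz⟩ : ∃ z, z ∉ closure A := by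
    simpa [dense_iff_closure_eq, eq_univ_iff_forall] using hA
  obtain ⟨C, hC, hCclosed, hCA⟩ :=
    exists_mem_nhds_isClosed_subset (isClosed_closure.isOpen_compl.mem_nhds hz)
  refine ⟨interior C, isOpen_interior, ⟨z, mem_interior_iff_mem_nhds.2 hC⟩, ?_⟩
  exact subset_compl_iff_disjoint_right.1 ((closure_minimal interior_subset hCclosed).trans hCA)

theorem Cardinal.mk_bounded_subset_le_two_power {α : Type u} {s : Set α} {κ : Cardinal.{u}}
    (hκ : ℵ₀ ≤ κ) (hs : #s ≤ 2 ^ κ) : #{t : Set α // t ⊆ s ∧ #t ≤ κ} ≤ 2 ^ κ :=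
  calc #{t : Set α // t ⊆ s ∧ #t ≤ κ} ≤ max #s ℵ₀ ^ κ := mk_bounded_subset_le s κ
    _ ≤ (2 ^ κ) ^ κ := power_le_power_right (max_le hs (hκ.trans (cantor κ).le))
    _ = 2 ^ κ := by rw [← power_mul, mul_eq_self hκ]

theorem Cardinal.mk_Iic_toType_succ_ord_le {κ : Cardinal.{u}} (hκ : ℵ₀ ≤ κ)
    (j : (Order.succ κ).ord.ToType) : #(Iic j) ≤ κ := by
  rw [← Iio_insert]
  calc #(insert j (Iio j) : Set _) ≤ #(Iio j) + 1 := mk_insert_le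
    _ ≤ κ + 1 := by gcongr; exact Order.lt_succ_iff.1 (by simpa using mk_Iio_lt j)
    _ = κ := add_one_eq hκ

theorem exists_strictMono_range_subset_of_le_mk {ι : Type u} [LinearOrder ι] [WellFoundedLT ι]
    {S : Set ι} {c : Cardinal.{u}} (hc : c ≤ #S) :
    ∃ e : c.ord.ToType → ι, StrictMono e ∧ range e ⊆ S := by
  have hle : typeLT c.ord.ToType ≤ typeLT S := by
    rwa [type_toType, ord_le, card_type]
  obtain ⟨f⟩ := type_le_iff'.1 hle
  exact ⟨fun j => f j, fun i j hij => f.map_rel_iff.2 hij, range_subset_iff.2 fun j => (f j).2⟩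

section IntersectionPoints

variable {X : Type u} [Nonempty X] {ι : Type u} [LinearOrder ι]

noncomputable def intersectionPoints (κ : Cardinal.{u}) (V : ι → Set X) (α : ι) : Set X :=
  (fun F : Set ι => Classical.epsilon (· ∈ ⋂ β ∈ F, V β)) '' {F | F ⊆ Iio α ∧ #F ≤ κ}

theorem intersectionPoints_congr {κ : Cardinal.{u}} {V W : ι → Set X} {α : ι}
    (h : ∀ β < α, V β = W β) : intersectionPoints κ V α = intersectionPoints κ W α := by
  refine image_congr fun F hF => ?_
  have : ⋂ β ∈ F, V β = ⋂ β ∈ F, W β := iInter₂_congr fun β hβ => h β (hF.1 hβ)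
  rw [this]

theorem mk_intersectionPoints_le {κ : Cardinal.{u}} (hκ : ℵ₀ ≤ κ) (V : ι → Set X) {α : ι}
    (hα : #(Iio α) ≤ 2 ^ κ) : #(intersectionPoints κ V α) ≤ 2 ^ κ :=
  mk_image_le.trans (mk_bounded_subset_le_two_power hκ hα)

theorem exists_cells_disjoint_closure_intersectionPoints [TopologicalSpace X] [RegularSpace X]
    [WellFoundedLT ι] {κ : Cardinal.{u}} (hκ : ℵ₀ ≤ κ) (hι : ∀ α : ι, #(Iio α) ≤ 2 ^ κ)
    (hX : ∀ A : Set X, #A ≤ 2 ^ κ → ¬ Dense A) :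
    ∃ V : ι → Set X, ∀ α, IsOpen (V α) ∧ (V α).Nonempty ∧
      Disjoint (closure (V α)) (closure (intersectionPoints κ V α)) := by
  refine exists_forall_transfinite _ (fun α V W hVW U hU => ?_) fun α V =>
    RegularSpace.exists_isOpen_disjoint_closure_of_not_dense
      (hX _ (mk_intersectionPoints_le hκ V (hι α)))
  rwa [← intersectionPoints_congr hVW]

theorem isFreeSeq_epsilon_iInter [TopologicalSpace X] {κ : Cardinal.{u}} {V : ι → Set X}
    {J : Type u} [LinearOrder J] {e : J → ι} (he : StrictMono e) (hJ : ∀ j : J, #(Iic j) ≤ κ)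
    (hV : ∀ j, Disjoint (closure (V (e j))) (closure (intersectionPoints κ V (e j))))
    {p : X} (hp : ∀ j, p ∈ V (e j)) :
    IsFreeSeq fun j => Classical.epsilon (· ∈ ⋂ β ∈ e '' Iic j, V β) := by
  set f : J → X := fun j => Classical.epsilon (· ∈ ⋂ β ∈ e '' Iic j, V β)
  have hf : ∀ i, f i ∈ ⋂ β ∈ e '' Iic i, V β := fun i =>
    Classical.epsilon_spec ⟨p, by simp [hp]⟩
  intro j
  have head : f '' {i | i < j} ⊆ intersectionPoints κ V (e j) := by
    rintro _ ⟨i, hij, rfl⟩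
    refine ⟨e '' Iic i, ⟨?_, mk_image_le.trans (hJ i)⟩, rfl⟩
    exact image_subset_iff.2 fun k hk => he (lt_of_le_of_lt hk hij)
  have tail : f '' {i | j ≤ i} ⊆ V (e j) := by
    rintro _ ⟨i, hji, rfl⟩
    exact mem_iInter₂.1 (hf i) _ (mem_image_of_mem e hji)
  exact ((hV j).mono (closure_mono tail) (closure_mono head)).symm.inter_eq

end IntersectionPoints

theorem stmt15_general {X : Type u} [TopologicalSpace X] [RegularSpace X]
    (κ : Cardinal.{u}) (hκ : ℵ₀ ≤ κ)
    (hF : ∀ (ι : Type u) [LinearOrder ι] [WellFoundedLT ι] (f : ι → X),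
      IsFreeSeq f → #ι ≤ κ)
    (lam : Cardinal.{u}) (h1 : κ < lam) (h2 : lam ≤ Order.succ (2 ^ κ))
    (hcal : IsCaliber X lam) :
    ∃ D : Set X, Dense D ∧ #D ≤ 2 ^ κ := by
  by_contra! hsmall
  have : Nonempty X := by
    by_contra hX
    rw [not_nonempty_iff] at hX
    exact (hsmall ∅ (by rw [dense_iff_closure_eq, closure_empty, univ_eq_empty_iff.2 hX])).not_ge
      (by simp)
  obtain ⟨V, hV⟩ := exists_cells_disjoint_closure_intersectionPoints (ι := lam.ord.ToType) hκ
    (fun α => Order.lt_succ_iff.1 ((by simpa using mk_Iio_lt α : #(Iio α) < lam).trans_le h2))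
    fun A hA hdense => (hsmall A hdense).not_ge hA
  obtain ⟨S, hS, p, hp⟩ := hcal _ V (by rw [mk_toType, card_ord])
    fun α => ⟨(hV α).1, (hV α).2.1⟩
  obtain ⟨e, he, heS⟩ :=
    exists_strictMono_range_subset_of_le_mk (hS.symm ▸ Order.succ_le_of_lt h1)
  have hfree := isFreeSeq_epsilon_iInter he (mk_Iic_toType_succ_ord_le hκ)
    (fun j => (hV (e j)).2.2) fun j => mem_iInter₂.1 hp _ (heS (mem_range_self j))
  have := hF _ _ hfree
  rw [mk_toType, card_ord] at this
  exact (Order.lt_succ κ).not_ge this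

/-- if `X` is regular, every free sequence in `X` has length at most
`κ`, and some cardinal `λ` with `κ < λ ≤ (2^κ)⁺` is a caliber of `X`, then `X` has a
dense subset of cardinality at most `2^κ`. -/
theorem stmt15 {X : Type u} [TopologicalSpace X] [T1Space X] [RegularSpace X]
    (κ : Cardinal.{u}) (hκ : ℵ₀ ≤ κ)
    (hF : ∀ (ι : Type u) [LinearOrder ι] [WellFoundedLT ι] (f : ι → X),
      IsFreeSeq f → #ι ≤ κ)
    (lam : Cardinal.{u}) (h1 : κ < lam) (h2 : lam ≤ Order.succ (2 ^ κ))
    (hcal : IsCaliber X lam) :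
    ∃ D : Set X, Dense D ∧ #D ≤ 2 ^ κ :=
  stmt15_general κ hκ hF lam h1 h2 hcal
end
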